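/- arXiv:1705.00988 — 10 statements merged into one kernel-verified Lean document; each statement's English description precedes it below -/
import Mathlib

section
/- Let 0 < β ≤ 1 and B ∈ ℝ. Then m = 0 is the unique real solution of the fixed-point equation m = (1/2)·(tanh(β(m+B)) + tanh(β(m−B))). -/
/-!
Write `x = β m` and `y = β B`. The addition formulas give
`tanh (x + y) + tanh (x - y) = sinh (2x) / (cosh x ^ 2 + sinh y ^ 2) ≤ 2 tanh x` for `x ≥ 0`,
so for `m > 0` the right-hand side of the equation is at most `tanh (β m) < β m ≤ m`.
The right-hand side is odd in `m`, so for `m < 0` it is `> m`.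
-/

open Real

namespace Real

theorem sinh_lt_mul_cosh {x : ℝ} (hx : 0 < x) : sinh x < x * cosh x := by
  have hmono : StrictMonoOn (fun y => y * cosh y - sinh y) (Set.Ici 0) := by
    refine strictMonoOn_of_deriv_pos (convex_Ici 0) (by fun_prop) fun y hy => ?_
    rw [interior_Ici, Set.mem_Ioi] at hy
    have hderiv : HasDerivAt (fun y => y * cosh y - sinh y) (y * sinh y) y :=
      (((hasDerivAt_id' y).mul (hasDerivAt_cosh y)).sub (hasDerivAt_sinh y)).congr_deriv (by ring)
    rw [hderiv.deriv]
    exact mul_pos hy (sinh_pos_iff.mpr hy)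
  simpa using hmono Set.self_mem_Ici hx.le hx

theorem tanh_lt_self {x : ℝ} (hx : 0 < x) : tanh x < x := by
  rw [tanh_eq_sinh_div_cosh, div_lt_iff₀ (cosh_pos x)]
  exact sinh_lt_mul_cosh hx

theorem cosh_add_mul_cosh_sub (x y : ℝ) :
    cosh (x + y) * cosh (x - y) = cosh x ^ 2 + sinh y ^ 2 := by
  rw [cosh_add, cosh_sub]
  linear_combination cosh x ^ 2 * cosh_sq_sub_sinh_sq y + sinh y ^ 2 * cosh_sq_sub_sinh_sq x

theorem tanh_add_add_tanh_sub (x y : ℝ) :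
    tanh (x + y) + tanh (x - y) = sinh (2 * x) / (cosh x ^ 2 + sinh y ^ 2) := by
  rw [← cosh_add_mul_cosh_sub, tanh_eq_sinh_div_cosh, tanh_eq_sinh_div_cosh,
    div_add_div _ _ (cosh_pos _).ne' (cosh_pos _).ne', ← sinh_add]
  ring_nf

theorem tanh_add_add_tanh_sub_le {x : ℝ} (hx : 0 ≤ x) (y : ℝ) :
    tanh (x + y) + tanh (x - y) ≤ 2 * tanh x := by
  have hcosh := cosh_pos x
  have hsinh : 0 ≤ sinh x := sinh_nonneg_iff.mpr hx
  calc tanh (x + y) + tanh (x - y)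
      = 2 * sinh x * cosh x / (cosh x ^ 2 + sinh y ^ 2) := by
        rw [tanh_add_add_tanh_sub, sinh_two_mul]
    _ ≤ 2 * sinh x * cosh x / cosh x ^ 2 :=
        div_le_div_of_nonneg_left (by positivity) (by positivity)
          (le_add_of_nonneg_right (sq_nonneg _))
    _ = 2 * tanh x := by
        rw [tanh_eq_sinh_div_cosh]
        field_simp

end Real

noncomputable def magnetizationMap (β B m : ℝ) : ℝ :=
  (1 / 2) * (tanh (β * (m + B)) + tanh (β * (m - B)))

theorem magnetizationMap_zero (β B : ℝ) : magnetizationMap β B 0 = 0 := by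
  simp [magnetizationMap, tanh_neg]

theorem magnetizationMap_neg (β B m : ℝ) :
    magnetizationMap β B (-m) = -magnetizationMap β B m := by
  have hplus : β * (-m + B) = -(β * (m - B)) := by ring
  have hminus : β * (-m - B) = -(β * (m + B)) := by ring
  rw [magnetizationMap, magnetizationMap, hplus, hminus, tanh_neg, tanh_neg]
  ring

theorem magnetizationMap_lt_self {β B m : ℝ} (hβ0 : 0 < β) (hβ1 : β ≤ 1) (hm : 0 < m) :
    magnetizationMap β B m < m := by
  have hx : 0 < β * m := mul_pos hβ0 hm
  calc magnetizationMap β B m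
      = (1 / 2) * (tanh (β * m + β * B) + tanh (β * m - β * B)) := by
        rw [magnetizationMap, mul_add β, mul_sub β]
    _ ≤ tanh (β * m) := by linarith [tanh_add_add_tanh_sub_le hx.le (β * B)]
    _ < β * m := tanh_lt_self hx
    _ ≤ m := mul_le_of_le_one_left hm.le hβ1

/-- For `0 < β ≤ 1` and any real `B`, `m = 0` is the unique real
solution of the stationarity equation
`m = (1/2) * (tanh (β*(m+B)) + tanh (β*(m-B)))`
of the random field Curie–Weiss model. -/
theorem rfcw_paramagnetic_unique_solution (β B : ℝ) (hβ0 : 0 < β) (hβ1 : β ≤ 1) :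
    ∀ m : ℝ,
      m = (1 / 2) * (Real.tanh (β * (m + B)) + Real.tanh (β * (m - B))) ↔ m = 0 := by
  intro m
  change m = magnetizationMap β B m ↔ m = 0
  refine ⟨fun hfix => ?_, fun hm => hm ▸ (magnetizationMap_zero β B).symm⟩
  rcases lt_trichotomy m 0 with hneg | hzero | hpos
  · have hlt := magnetizationMap_lt_self (B := B) hβ0 hβ1 (neg_pos.mpr hneg)
    rw [magnetizationMap_neg] at hlt
    linarith
  · exact hzero
  · linarith [magnetizationMap_lt_self (B := B) hβ0 hβ1 hpos]
end

section
/- Let β > 1 and B ≥ 0 satisfy cosh²(βB) < β. Then there exists m > 0 with m = (1/2)·(tanh(β(m+B)) + tanh(β(m−B))); consequently (by oddness of the right-hand side in m) −m is also a solution, so the fixed-point equation has at least two nonzero (ferromagnetic) solutions. -/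
/-!
Put `g m = φ(m) - m`, where `φ(m) = (tanh (β(m+B)) + tanh (β(m-B))) / 2`. Then `g 0 = 0`, and
`g'(0) = β / cosh²(βB) - 1 > 0` exactly below the critical curve, so `g` is positive just to the
right of `0`; since `|tanh| < 1`, `g 1 < 0`, and the intermediate value theorem gives a root
`m ∈ (0, 1)`. The map `φ` is odd, so `-m` is a root as well.
-/

open Filter Set Topology

namespace Real

theorem hasDerivAt_tanh (x : ℝ) : HasDerivAt tanh (cosh x ^ 2)⁻¹ x := by
  have hquot : HasDerivAt (fun y => sinh y / cosh y)
      ((cosh x * cosh x - sinh x * sinh x) / cosh x ^ 2) x :=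
    (hasDerivAt_sinh x).div (hasDerivAt_cosh x) (cosh_pos x).ne'
  have hnum : cosh x * cosh x - sinh x * sinh x = 1 := by
    nlinarith [cosh_sq x]
  rw [hnum, one_div] at hquot
  exact hquot.congr_of_eventuallyEq (Eventually.of_forall tanh_eq_sinh_div_cosh)

@[fun_prop]
theorem continuous_tanh : Continuous tanh :=
  continuous_iff_continuousAt.mpr fun x => (hasDerivAt_tanh x).continuousAt

end Real

theorem exists_mem_Ioo_eq_zero_of_hasDerivAt_pos {f : ℝ → ℝ} {f' x₀ b : ℝ}
    (hcont : ContinuousOn f (Icc x₀ b)) (hroot : f x₀ = 0) (hderiv : HasDerivAt f f' x₀)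
    (hpos : 0 < f') (hxb : x₀ < b) (hneg : f b < 0) : ∃ c ∈ Ioo x₀ b, f c = 0 := by
  have hslope : ∀ᶠ y in 𝓝[>] x₀, 0 < slope f x₀ y :=
    (hasDerivAt_iff_tendsto_slope.mp hderiv |>.mono_left (nhdsGT_le_nhdsNE x₀)).eventually
      (eventually_gt_nhds hpos)
  obtain ⟨y, hy_slope, hy⟩ := (hslope.and (Ioo_mem_nhdsGT hxb)).exists
  have hfy : 0 < f y := pos_of_slope_pos hy.1 hy_slope hroot
  obtain ⟨c, hc, hfc⟩ :=
    intermediate_value_Ioo' hy.2.le (hcont.mono (Icc_subset_Icc hy.1.le le_rfl)) ⟨hneg, hfy⟩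
  exact ⟨c, ⟨hy.1.trans hc.1, hc.2⟩, hfc⟩

section RandomFieldCurieWeiss

open Real

variable (β B : ℝ)

noncomputable def rfcwMagnetizationMap (m : ℝ) : ℝ :=
  (1 / 2) * (tanh (β * (m + B)) + tanh (β * (m - B)))

theorem rfcwMagnetizationMap_neg (m : ℝ) :
    rfcwMagnetizationMap β B (-m) = -rfcwMagnetizationMap β B m := by
  simp only [rfcwMagnetizationMap]
  rw [show β * (-m + B) = -(β * (m - B)) by ring, show β * (-m - B) = -(β * (m + B)) by ring,
    tanh_neg, tanh_neg]
  ring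

theorem rfcwMagnetizationMap_zero : rfcwMagnetizationMap β B 0 = 0 := by
  have h := rfcwMagnetizationMap_neg β B 0
  rw [neg_zero] at h
  linarith

theorem rfcwMagnetizationMap_lt_one (m : ℝ) : rfcwMagnetizationMap β B m < 1 := by
  have h₁ := tanh_lt_one (β * (m + B))
  have h₂ := tanh_lt_one (β * (m - B))
  simp only [rfcwMagnetizationMap]
  linarith

theorem continuous_rfcwMagnetizationMap : Continuous (rfcwMagnetizationMap β B) := by
  unfold rfcwMagnetizationMap
  fun_prop

theorem hasDerivAt_rfcwMagnetizationMap (m : ℝ) :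
    HasDerivAt (rfcwMagnetizationMap β B)
      ((1 / 2) * ((cosh (β * (m + B)) ^ 2)⁻¹ * β + (cosh (β * (m - B)) ^ 2)⁻¹ * β)) m := by
  have hplus : HasDerivAt (fun m => β * (m + B)) β m := by
    simpa using ((hasDerivAt_id m).add_const B).const_mul β
  have hminus : HasDerivAt (fun m => β * (m - B)) β m := by
    simpa using ((hasDerivAt_id m).sub_const B).const_mul β
  exact (((hasDerivAt_tanh _).comp m hplus).add
    ((hasDerivAt_tanh _).comp m hminus)).const_mul (1 / 2)

theorem hasDerivAt_rfcwMagnetizationMap_zero :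
    HasDerivAt (rfcwMagnetizationMap β B) (β / cosh (β * B) ^ 2) 0 := by
  convert hasDerivAt_rfcwMagnetizationMap β B 0 using 1
  rw [zero_add, zero_sub, mul_neg, cosh_neg]
  ring

end RandomFieldCurieWeiss

theorem rfcw_ferromagnetic_solutions_exist_general (β B : ℝ)
    (hcrit : Real.cosh (β * B) ^ 2 < β) :
    ∃ m : ℝ, 0 < m ∧
      m = (1 / 2) * (Real.tanh (β * (m + B)) + Real.tanh (β * (m - B))) ∧
      -m = (1 / 2) * (Real.tanh (β * (-m + B)) + Real.tanh (β * (-m - B))) := by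
  have hslope : 0 < β / Real.cosh (β * B) ^ 2 - 1 := by
    rw [sub_pos, one_lt_div (by positivity)]
    exact hcrit
  obtain ⟨m, hm, hfixed⟩ := exists_mem_Ioo_eq_zero_of_hasDerivAt_pos
    ((continuous_rfcwMagnetizationMap β B).sub continuous_id).continuousOn
    (by simp [rfcwMagnetizationMap_zero]) ((hasDerivAt_rfcwMagnetizationMap_zero β B).sub (hasDerivAt_id 0))
    hslope zero_lt_one (by simpa using rfcwMagnetizationMap_lt_one β B 1)
  have hfixed : rfcwMagnetizationMap β B m = m := sub_eq_zero.mp hfixed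
  refine ⟨m, hm.1, hfixed.symm, ?_⟩
  change -m = rfcwMagnetizationMap β B (-m)
  rw [rfcwMagnetizationMap_neg, hfixed]

/-- For `β > 1`, `B ≥ 0` with `cosh²(βB) < β` (strictly below the
critical curve), the stationarity equation
`m = (1/2) * (tanh (β*(m+B)) + tanh (β*(m-B)))`
has a solution `m > 0`; consequently `-m` is also a solution, so there are at least
two nonzero (ferromagnetic) solutions. -/
theorem rfcw_ferromagnetic_solutions_exist (β B : ℝ) (hβ : 1 < β) (hB : 0 ≤ B)
    (hcrit : Real.cosh (β * B) ^ 2 < β) :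
    ∃ m : ℝ, 0 < m ∧
      m = (1 / 2) * (Real.tanh (β * (m + B)) + Real.tanh (β * (m - B))) ∧
      -m = (1 / 2) * (Real.tanh (β * (-m + B)) + Real.tanh (β * (-m - B))) :=
  rfcw_ferromagnetic_solutions_exist_general β B hcrit
end

section
/- Fix β, B ∈ ℝ and set q₀ = tanh(βB). For every integer k ≥ 1: if k is even, then ∂₁^k(G₂⁺ + G₂⁻)(0,q₀) = 0, ∂₁^{k−1}∂₂(G₂⁺ + G₂⁻)(0,q₀) = −2β^{k−1}·sinh(βB), ∂₁^k(G₂⁺ − G₂⁻)(0,q₀) = −2k·β^{k−1}·sinh(βB), and ∂₁^{k−1}∂₂(G₂⁺ − G₂⁻)(0,q₀) = 0; if k is odd, then ∂₁^k(G₂⁺ + G₂⁻)(0,q₀) = 2β^k/cosh(βB) − 2k·β^{k−1}·cosh(βB), ∂₁^{k−1}∂₂(G₂⁺ + G₂⁻)(0,q₀) = 0, ∂₁^k(G₂⁺ − G₂⁻)(0,q₀) = 0, and ∂₁^{k−1}∂₂(G₂⁺ − G₂⁻)(0,q₀) = −2β^{k−1}·cosh(βB). -/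
/-!
By the addition formulas for `sinh` and `cosh`, at `y = tanh(βB)` the functions
`G₂⁺ ± G₂⁻` and their `y`-derivatives collapse to `(2 / cosh βB) sinh(βx) − 2 cosh βB · x cosh(βx)`,
`−2 sinh βB · x sinh(βx)`, `−2 sinh βB · sinh(βx)` and `−2 cosh βB · cosh(βx)`.
The `k`-th derivative at `0` of `sinh(βx)` resp. `cosh(βx)` is `β^k` or `0` according to the
parity of `k`, and Leibniz' rule gives `(x f)^{(k)}(0) = k f^{(k-1)}(0)`.
-/

/-- `G₂^{+}(x,y) = sinh(β(x+B)) − (x+y)·cosh(β(x+B))`. -/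
noncomputable def G2p (β B x y : ℝ) : ℝ :=
  Real.sinh (β * (x + B)) - (x + y) * Real.cosh (β * (x + B))

/-- `G₂^{-}(x,y) = sinh(β(x−B)) − (x−y)·cosh(β(x−B))`. -/
noncomputable def G2m (β B x y : ℝ) : ℝ :=
  Real.sinh (β * (x - B)) - (x - y) * Real.cosh (β * (x - B))

open Real

theorem iteratedDeriv_id_mul_zero {𝕜 : Type*} [NontriviallyNormedField 𝕜] {f : 𝕜 → 𝕜} {k : ℕ}
    (hf : ContDiffAt 𝕜 k f 0) :
    iteratedDeriv k (fun x => x * f x) 0 = k * iteratedDeriv (k - 1) f 0 := by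
  rw [iteratedDeriv_fun_mul (f := fun x => x) contDiffAt_id hf]
  simp +contextual [iteratedDeriv_fun_id_zero]

section
variable (β : ℝ) {n : ℕ}

theorem iteratedDeriv_sinh_mul_zero_of_even (hn : Even n) :
    iteratedDeriv n (fun x => sinh (β * x)) 0 = 0 := by
  obtain ⟨j, rfl⟩ := hn
  simp [iteratedDeriv_comp_const_mul contDiff_sinh, ← two_mul]

theorem iteratedDeriv_sinh_mul_zero_of_odd (hn : Odd n) :
    iteratedDeriv n (fun x => sinh (β * x)) 0 = β ^ n := by
  obtain ⟨j, rfl⟩ := hn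
  simp [iteratedDeriv_comp_const_mul contDiff_sinh]

theorem iteratedDeriv_cosh_mul_zero_of_even (hn : Even n) :
    iteratedDeriv n (fun x => cosh (β * x)) 0 = β ^ n := by
  obtain ⟨j, rfl⟩ := hn
  simp [iteratedDeriv_comp_const_mul contDiff_cosh, ← two_mul]

theorem iteratedDeriv_cosh_mul_zero_of_odd (hn : Odd n) :
    iteratedDeriv n (fun x => cosh (β * x)) 0 = 0 := by
  obtain ⟨j, rfl⟩ := hn
  simp [iteratedDeriv_comp_const_mul contDiff_cosh]

end

section
variable (β B x : ℝ)

theorem G2p_add_G2m_tanh :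
    G2p β B x (tanh (β * B)) + G2m β B x (tanh (β * B))
      = 2 / cosh (β * B) * sinh (β * x) - 2 * cosh (β * B) * (x * cosh (β * x)) := by
  have hc : cosh (β * B) ≠ 0 := (cosh_pos _).ne'
  simp only [G2p, G2m, mul_add, mul_sub, sinh_add, cosh_add, sinh_sub, cosh_sub,
    tanh_eq_sinh_div_cosh]
  field_simp
  linear_combination (2 * sinh (β * x)) * cosh_sq_sub_sinh_sq (β * B)

theorem G2p_sub_G2m_tanh :
    G2p β B x (tanh (β * B)) - G2m β B x (tanh (β * B))
      = -2 * sinh (β * B) * (x * sinh (β * x)) := by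
  have hc : cosh (β * B) ≠ 0 := (cosh_pos _).ne'
  simp only [G2p, G2m, mul_add, mul_sub, sinh_add, cosh_add, sinh_sub, cosh_sub,
    tanh_eq_sinh_div_cosh]
  field_simp
  ring

theorem hasDerivAt_G2p (y : ℝ) : HasDerivAt (G2p β B x) (-cosh (β * (x + B))) y := by
  unfold G2p
  simpa using (((hasDerivAt_id y).const_add x).mul_const (cosh (β * (x + B)))).const_sub
    (sinh (β * (x + B)))

theorem hasDerivAt_G2m (y : ℝ) : HasDerivAt (G2m β B x) (cosh (β * (x - B))) y := by
  unfold G2m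
  simpa using (((hasDerivAt_id y).const_sub x).mul_const (cosh (β * (x - B)))).const_sub
    (sinh (β * (x - B)))

theorem deriv_G2p_add_G2m (y : ℝ) :
    deriv (fun y' => G2p β B x y' + G2m β B x y') y = -2 * sinh (β * B) * sinh (β * x) := by
  rw [((hasDerivAt_G2p β B x y).fun_add (hasDerivAt_G2m β B x y)).deriv]
  simp only [mul_add, mul_sub, cosh_add, cosh_sub]
  ring

theorem deriv_G2p_sub_G2m (y : ℝ) :
    deriv (fun y' => G2p β B x y' - G2m β B x y') y = -2 * cosh (β * B) * cosh (β * x) := by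
  rw [((hasDerivAt_G2p β B x y).fun_sub (hasDerivAt_G2m β B x y)).deriv]
  simp only [mul_add, mul_sub, cosh_add, cosh_sub]
  ring

end

section
variable (β B : ℝ) (k : ℕ)

theorem iteratedDeriv_G2p_add_G2m_tanh :
    iteratedDeriv k (fun x => G2p β B x (tanh (β * B)) + G2m β B x (tanh (β * B))) 0
      = 2 / cosh (β * B) * iteratedDeriv k (fun x => sinh (β * x)) 0
        - 2 * cosh (β * B) * (k * iteratedDeriv (k - 1) (fun x => cosh (β * x)) 0) := by
  simp only [G2p_add_G2m_tanh]
  rw [iteratedDeriv_fun_sub (by fun_prop) (by fun_prop), iteratedDeriv_const_mul_field,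
    iteratedDeriv_const_mul_field, iteratedDeriv_id_mul_zero (by fun_prop)]

theorem iteratedDeriv_G2p_sub_G2m_tanh :
    iteratedDeriv k (fun x => G2p β B x (tanh (β * B)) - G2m β B x (tanh (β * B))) 0
      = -2 * sinh (β * B) * (k * iteratedDeriv (k - 1) (fun x => sinh (β * x)) 0) := by
  simp only [G2p_sub_G2m_tanh]
  rw [iteratedDeriv_const_mul_field, iteratedDeriv_id_mul_zero (by fun_prop)]

theorem iteratedDeriv_deriv_G2p_add_G2m (y : ℝ) :
    iteratedDeriv k (fun x => deriv (fun y' => G2p β B x y' + G2m β B x y') y) 0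
      = -2 * sinh (β * B) * iteratedDeriv k (fun x => sinh (β * x)) 0 := by
  simp only [deriv_G2p_add_G2m]
  exact iteratedDeriv_const_mul_field _ _

theorem iteratedDeriv_deriv_G2p_sub_G2m (y : ℝ) :
    iteratedDeriv k (fun x => deriv (fun y' => G2p β B x y' - G2m β B x y') y) 0
      = -2 * cosh (β * B) * iteratedDeriv k (fun x => cosh (β * x)) 0 := by
  simp only [deriv_G2p_sub_G2m]
  exact iteratedDeriv_const_mul_field _ _

end

/-- Entries of the matrix `D^k 𝒢₂` at the paramagnetic stationary
point `(0, tanh(βB))`, for general `β, B`.  Here `∂₁^k` is `iteratedDeriv k` in the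
first variable and `∂₂` is `deriv` in the second variable. -/
theorem DkG2_at_paramagnetic_point (β B : ℝ) :
    ∀ k : ℕ, 1 ≤ k →
      (Even k →
        iteratedDeriv k
            (fun x' => G2p β B x' (Real.tanh (β * B)) + G2m β B x' (Real.tanh (β * B))) 0
          = 0 ∧
        iteratedDeriv (k - 1)
            (fun x' => deriv (fun y' => G2p β B x' y' + G2m β B x' y') (Real.tanh (β * B))) 0
          = -2 * β ^ (k - 1) * Real.sinh (β * B) ∧
        iteratedDeriv k
            (fun x' => G2p β B x' (Real.tanh (β * B)) - G2m β B x' (Real.tanh (β * B))) 0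
          = -2 * (k : ℝ) * β ^ (k - 1) * Real.sinh (β * B) ∧
        iteratedDeriv (k - 1)
            (fun x' => deriv (fun y' => G2p β B x' y' - G2m β B x' y') (Real.tanh (β * B))) 0
          = 0) ∧
      (Odd k →
        iteratedDeriv k
            (fun x' => G2p β B x' (Real.tanh (β * B)) + G2m β B x' (Real.tanh (β * B))) 0
          = 2 * β ^ k / Real.cosh (β * B) - 2 * (k : ℝ) * β ^ (k - 1) * Real.cosh (β * B) ∧
        iteratedDeriv (k - 1)
            (fun x' => deriv (fun y' => G2p β B x' y' + G2m β B x' y') (Real.tanh (β * B))) 0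
          = 0 ∧
        iteratedDeriv k
            (fun x' => G2p β B x' (Real.tanh (β * B)) - G2m β B x' (Real.tanh (β * B))) 0
          = 0 ∧
        iteratedDeriv (k - 1)
            (fun x' => deriv (fun y' => G2p β B x' y' - G2m β B x' y') (Real.tanh (β * B))) 0
          = -2 * β ^ (k - 1) * Real.cosh (β * B)) := by
  intro k hk
  rw [iteratedDeriv_G2p_add_G2m_tanh, iteratedDeriv_G2p_sub_G2m_tanh,
    iteratedDeriv_deriv_G2p_add_G2m, iteratedDeriv_deriv_G2p_sub_G2m]
  obtain ⟨m, rfl⟩ := Nat.exists_eq_add_of_le' hk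
  rw [Nat.add_sub_cancel]
  refine ⟨fun hk_even => ?_, fun hk_odd => ?_⟩
  · have hm : Odd m := Nat.not_even_iff_odd.mp (Nat.even_add_one.mp hk_even)
    rw [iteratedDeriv_sinh_mul_zero_of_even β hk_even, iteratedDeriv_sinh_mul_zero_of_odd β hm,
      iteratedDeriv_cosh_mul_zero_of_odd β hm]
    refine ⟨by ring, by ring, by push_cast; ring, by ring⟩
  · have hm : Even m := Nat.not_odd_iff_even.mp (Nat.odd_add_one.mp hk_odd)
    rw [iteratedDeriv_sinh_mul_zero_of_odd β hk_odd, iteratedDeriv_sinh_mul_zero_of_even β hm,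
      iteratedDeriv_cosh_mul_zero_of_even β hm]
    refine ⟨by push_cast; ring, by ring, by ring, by ring⟩
end

section
/- Fix real constants a_k^+, a_k^- for even k ∈ {2,4} and a_k^0, a_k^1 for odd k ∈ {1,3,5} with a₁^0 = 0 and a₁^1 ≠ 0, and define the operators 𝒬_k (k = 1,…,5) and P, P₀ as in the context. Let ψ ∈ V₀, i.e. ψ(x,y) = ψ₀(x) with ψ₀ ∈ C_c^∞(ℝ). Define recursively ψ[0] = ψ and, for 1 ≤ r ≤ 4, φ[r] = ∑_{l=0}^{r−1} 𝒬_{r+1−l} ψ[l] and ψ[r] = P(φ[r]). Then P₀φ[1] = 0 and P₀φ[3] = 0, while P₀φ[2] = 𝒬₃⁰ψ + 𝒬₂⁻P𝒬₂⁺ψ and P₀φ[4] = 𝒬₅⁰ψ + 𝒬₂⁻P𝒬₄⁺ψ + 𝒬₄⁻P𝒬₂⁺ψ + 𝒬₂⁻P𝒬₃¹P𝒬₂⁺ψ + 𝒬₂⁻P(𝒬₃⁰ + 𝒬₂⁻P𝒬₂⁺)P𝒬₂⁺ψ. -/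
/-- `𝒬ₖ⁺[a] g (x,y) = a·x^{k-1}·y·∂₁g(x,y)` (even `k`). -/
noncomputable def Qplus (a : ℝ) (k : ℕ) (g : ℝ → ℝ → ℝ) : ℝ → ℝ → ℝ :=
  fun x y => a * x ^ (k - 1) * y * deriv (fun x' => g x' y) x

/-- `𝒬ₖ⁻[a] g (x,y) = a·x^k·∂₂g(x,y)` (even `k`). -/
noncomputable def Qminus (a : ℝ) (k : ℕ) (g : ℝ → ℝ → ℝ) : ℝ → ℝ → ℝ :=
  fun x y => a * x ^ k * deriv (fun y' => g x y') y

/-- `𝒬ₖ⁰[a] g (x,y) = a·x^k·∂₁g(x,y)` (odd `k`). -/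
noncomputable def Qzero (a : ℝ) (k : ℕ) (g : ℝ → ℝ → ℝ) : ℝ → ℝ → ℝ :=
  fun x y => a * x ^ k * deriv (fun x' => g x' y) x

/-- `𝒬ₖ¹[a] g (x,y) = a·x^{k-1}·y·∂₂g(x,y)` (odd `k`). -/
noncomputable def Qone (a : ℝ) (k : ℕ) (g : ℝ → ℝ → ℝ) : ℝ → ℝ → ℝ :=
  fun x y => a * x ^ (k - 1) * y * deriv (fun y' => g x y') y

/-! ### Auxiliary machinery -/

/-- Smooth and compactly supported. -/
def Nice (c : ℝ → ℝ) : Prop := ContDiff ℝ (⊤ : ℕ∞) c ∧ HasCompactSupport c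

lemma nice_zero : Nice (fun _ : ℝ => (0:ℝ)) :=
  ⟨contDiff_const, by rw [hasCompactSupport_def]; simp⟩

lemma Nice.diff {c : ℝ → ℝ} (h : Nice c) : Differentiable ℝ c := h.1.differentiable (by simp)

lemma Nice.deriv' {c : ℝ → ℝ} (h : Nice c) : Nice (deriv c) := by
  refine ⟨?_, h.2.deriv⟩
  exact (contDiff_infty_iff_deriv.mp h.1).2

lemma Nice.add' {c d : ℝ → ℝ} (h : Nice c) (h' : Nice d) : Nice (fun x => c x + d x) :=
  ⟨h.1.add h'.1, h.2.add h'.2⟩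

/-- monomial coefficient `a·x^k·c(x)`. -/
noncomputable def mon (a : ℝ) (k : ℕ) (c : ℝ → ℝ) : ℝ → ℝ := fun x => a * (x ^ k * c x)

/-- `P`-type coefficient `-(c(x)/b)`. -/
noncomputable def pm (b : ℝ) (c : ℝ → ℝ) : ℝ → ℝ := fun x => -(c x / b)

lemma Nice.mon' {c : ℝ → ℝ} (h : Nice c) (a : ℝ) (k : ℕ) : Nice (mon a k c) := by
  refine ⟨contDiff_const.mul ((contDiff_id.pow k).mul h.1), ?_⟩
  apply h.2.mono'
  intro x hx
  have : c x ≠ 0 := by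
    intro h0; simp [mon, h0, Function.mem_support] at hx
  exact subset_tsupport c this

lemma Nice.pm' {c : ℝ → ℝ} (h : Nice c) (b : ℝ) : Nice (pm b c) := by
  refine ⟨(h.1.div_const b).neg, ?_⟩
  apply h.2.mono'
  intro x hx
  have : c x ≠ 0 := by
    intro h0; simp [pm, h0, Function.mem_support] at hx
  exact subset_tsupport c this

/-- list-indexed coefficient family. -/
noncomputable def cf (l : List (ℝ → ℝ)) : ℕ → ℝ → ℝ := fun j => l.getD j (fun _ => 0)

lemma nice_cf (l : List (ℝ → ℝ)) (h : ∀ f ∈ l, Nice f) (j : ℕ) :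
    ContDiff ℝ (⊤ : ℕ∞) (cf l j) ∧ HasCompactSupport (cf l j) := by
  unfold cf
  rcases lt_or_ge j l.length with hj | hj
  · rw [List.getD_eq_getElem _ _ hj]; exact h _ (l.getElem_mem hj)
  · rw [List.getD_eq_default _ _ hj]; exact nice_zero

lemma deriv_cmul {e : ℝ → ℝ} (he : Differentiable ℝ e) (a x : ℝ) :
    deriv (fun t => a * e t) x = a * deriv e x := deriv_const_mul a (he x)

lemma deriv_cmul2 {e1 e2 : ℝ → ℝ} (h1 : Differentiable ℝ e1) (h2 : Differentiable ℝ e2)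
    (a b x : ℝ) :
    deriv (fun t => a * e1 t + b * e2 t) x = a * deriv e1 x + b * deriv e2 x := by
  rw [deriv_fun_add (((h1 x).const_mul a)) ((h2 x).const_mul b), deriv_cmul h1, deriv_cmul h2]

lemma deriv_lin (C y : ℝ) : deriv (fun t => t * C) y = C := by
  simpa using ((hasDerivAt_id y).mul_const C).deriv

lemma deriv_sq (C y : ℝ) : deriv (fun t => t ^ 2 * C) y = 2 * y * C := by
  have := ((hasDerivAt_pow 2 y).mul_const C).deriv
  simpa using this

lemma deriv_lin_cube (C1 C2 y : ℝ) :
    deriv (fun t => t * C1 + t ^ 3 * C2) y = C1 + 3 * y ^ 2 * C2 := by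
  have := (((hasDerivAt_id y).mul_const C1).fun_add ((hasDerivAt_pow 3 y).mul_const C2)).deriv
  simpa using this

/-- For `ψ ∈ V₀` and the recursively defined perturbations
`φ[r] = ∑_{l=0}^{r-1} 𝒬_{r+1-l} ψ[l]`, `ψ[r] = P(φ[r])`, one has `P₀φ[1] = 0`,
`P₀φ[3] = 0`, `P₀φ[2] = 𝒬₃⁰ψ + 𝒬₂⁻P𝒬₂⁺ψ`, and
`P₀φ[4] = 𝒬₅⁰ψ + 𝒬₂⁻P𝒬₄⁺ψ + 𝒬₄⁻P𝒬₂⁺ψ + 𝒬₂⁻P𝒬₃¹P𝒬₂⁺ψ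
  + 𝒬₂⁻P(𝒬₃⁰ + 𝒬₂⁻P𝒬₂⁺)P𝒬₂⁺ψ`.
Here `P` and `P₀` are characterised by their action on `V`:
`P(∑_{j≤r} y^j c_j) = −∑_{j=1}^r y^j c_j/(j·a₁¹)` and `P₀(∑_{j≤r} y^j c_j) = c₀`. -/
theorem P0_phi_evaluation
    (a2p a2m a4p a4m a10 a11 a30 a31 a50 a51 : ℝ)
    (ha10 : a10 = 0) (ha11 : a11 ≠ 0)
    (P : (ℝ → ℝ → ℝ) → ℝ → ℝ → ℝ)
    (hP : ∀ (f : ℝ → ℝ → ℝ) (r : ℕ) (c : ℕ → ℝ → ℝ),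
      (∀ j, ContDiff ℝ (⊤ : ℕ∞) (c j) ∧ HasCompactSupport (c j)) →
      (∀ x y : ℝ, f x y = ∑ j ∈ Finset.range (r + 1), y ^ j * c j x) →
      ∀ x y : ℝ, P f x y = -∑ j ∈ Finset.Icc 1 r, y ^ j * c j x / ((j : ℝ) * a11))
    (P0 : (ℝ → ℝ → ℝ) → ℝ → ℝ → ℝ)
    (hP0 : ∀ (f : ℝ → ℝ → ℝ) (r : ℕ) (c : ℕ → ℝ → ℝ),
      (∀ j, ContDiff ℝ (⊤ : ℕ∞) (c j) ∧ HasCompactSupport (c j)) →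
      (∀ x y : ℝ, f x y = ∑ j ∈ Finset.range (r + 1), y ^ j * c j x) →
      ∀ x y : ℝ, P0 f x y = c 0 x)
    (ψ0 : ℝ → ℝ) (hψ0 : ContDiff ℝ (⊤ : ℕ∞) ψ0) (hψ0c : HasCompactSupport ψ0) :
    let Q1 : (ℝ → ℝ → ℝ) → ℝ → ℝ → ℝ :=
      fun g x y => Qzero a10 1 g x y + Qone a11 1 g x y
    let Q2 : (ℝ → ℝ → ℝ) → ℝ → ℝ → ℝ :=
      fun g x y => Qplus a2p 2 g x y + Qminus a2m 2 g x y
    let Q3 : (ℝ → ℝ → ℝ) → ℝ → ℝ → ℝ :=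
      fun g x y => Qzero a30 3 g x y + Qone a31 3 g x y
    let Q4 : (ℝ → ℝ → ℝ) → ℝ → ℝ → ℝ :=
      fun g x y => Qplus a4p 4 g x y + Qminus a4m 4 g x y
    let Q5 : (ℝ → ℝ → ℝ) → ℝ → ℝ → ℝ :=
      fun g x y => Qzero a50 5 g x y + Qone a51 5 g x y
    let ψ : ℝ → ℝ → ℝ := fun x _ => ψ0 x
    let φ1 : ℝ → ℝ → ℝ := Q2 ψ
    let ψ1 : ℝ → ℝ → ℝ := P φ1
    let φ2 : ℝ → ℝ → ℝ := fun x y => Q3 ψ x y + Q2 ψ1 x y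
    let ψ2 : ℝ → ℝ → ℝ := P φ2
    let φ3 : ℝ → ℝ → ℝ := fun x y => Q4 ψ x y + Q3 ψ1 x y + Q2 ψ2 x y
    let ψ3 : ℝ → ℝ → ℝ := P φ3
    let φ4 : ℝ → ℝ → ℝ := fun x y => Q5 ψ x y + Q4 ψ1 x y + Q3 ψ2 x y + Q2 ψ3 x y
    (∀ x y : ℝ, P0 φ1 x y = 0) ∧
    (∀ x y : ℝ, P0 φ3 x y = 0) ∧
    (∀ x y : ℝ, P0 φ2 x y
      = Qzero a30 3 ψ x y + Qminus a2m 2 (P (Qplus a2p 2 ψ)) x y) ∧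
    (∀ x y : ℝ, P0 φ4 x y
      = Qzero a50 5 ψ x y
        + Qminus a2m 2 (P (Qplus a4p 4 ψ)) x y
        + Qminus a4m 4 (P (Qplus a2p 2 ψ)) x y
        + Qminus a2m 2 (P (Qone a31 3 (P (Qplus a2p 2 ψ)))) x y
        + Qminus a2m 2 (P (fun x' y' =>
            Qzero a30 3 (P (Qplus a2p 2 ψ)) x' y'
              + Qminus a2m 2 (P (Qplus a2p 2 (P (Qplus a2p 2 ψ)))) x' y')) x y) := by
  intro Q1 Q2 Q3 Q4 Q5 ψ φ1 ψ1 φ2 ψ2 φ3 ψ3 φ4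
  have N0 : Nice ψ0 := ⟨hψ0, hψ0c⟩
  set z : ℝ → ℝ := fun _ => 0 with hz
  have Nz : Nice z := nice_zero
  -- coefficient functions
  set c11 : ℝ → ℝ := mon a2p 1 (deriv ψ0) with hc11
  have Nc11 : Nice c11 := N0.deriv'.mon' a2p 1
  set E1 : ℝ → ℝ := pm (1 * a11) c11 with hE1
  have NE1 : Nice E1 := Nc11.pm' _
  -- φ1 representation
  have hrep1 : ∀ x y : ℝ, φ1 x y = ∑ j ∈ Finset.range 2, y ^ j * cf [z, c11] j x := by
    intro x y
    simp only [φ1, Q2, ψ, Qplus, Qminus, deriv_const]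
    simp [cf, Finset.sum_range_succ, hc11, mon, hz]
    ring
  have hcl1 : ∀ f ∈ [z, c11], Nice f := by
    intro f hf; fin_cases hf
    · exact Nz
    · exact Nc11
  -- claim 1
  have claim1 : ∀ x y : ℝ, P0 φ1 x y = 0 := by
    intro x y
    rw [hP0 φ1 1 (cf [z, c11]) (nice_cf _ hcl1) hrep1 x y]
    simp [cf, hz]
  -- ψ1 formula
  have hψ1 : ∀ x y : ℝ, ψ1 x y = y * E1 x := by
    intro x y
    simp only [ψ1]
    rw [hP φ1 1 (cf [z, c11]) (nice_cf _ hcl1) hrep1 x y]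
    simp [cf, hE1, pm]
    ring
  have hd1ψ1 : ∀ y x : ℝ, deriv (fun x' => ψ1 x' y) x = y * deriv E1 x := by
    intro y x
    rw [show (fun x' => ψ1 x' y) = fun x' => y * E1 x' from funext fun x' => hψ1 x' y]
    exact deriv_cmul NE1.diff y x
  have hd2ψ1 : ∀ x y : ℝ, deriv (fun y' => ψ1 x y') y = E1 x := by
    intro x y
    rw [show (fun y' => ψ1 x y') = fun y' => y' * E1 x from
      funext fun y' => by rw [hψ1]]
    exact deriv_lin _ y
  -- u := P(Q2⁺ψ)
  set u : ℝ → ℝ → ℝ := P (Qplus a2p 2 ψ) with hu0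
  have hrepu : ∀ x y : ℝ, Qplus a2p 2 ψ x y = ∑ j ∈ Finset.range 2, y ^ j * cf [z, c11] j x := by
    intro x y
    simp only [ψ, Qplus]
    simp [cf, Finset.sum_range_succ, hc11, mon, hz]
    ring
  have hu : ∀ x y : ℝ, u x y = y * E1 x := by
    intro x y
    rw [hu0, hP (Qplus a2p 2 ψ) 1 (cf [z, c11]) (nice_cf _ hcl1) hrepu x y]
    simp [cf, hE1, pm]
    ring
  have hd1u : ∀ y x : ℝ, deriv (fun x' => u x' y) x = y * deriv E1 x := by
    intro y x
    rw [show (fun x' => u x' y) = fun x' => y * E1 x' from funext fun x' => hu x' y]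
    exact deriv_cmul NE1.diff y x
  have hd2u : ∀ x y : ℝ, deriv (fun y' => u x y') y = E1 x := by
    intro x y
    rw [show (fun y' => u x y') = fun y' => y' * E1 x from
      funext fun y' => by rw [hu]]
    exact deriv_lin _ y
  -- φ2 representation
  set c20 : ℝ → ℝ := fun x => mon a30 3 (deriv ψ0) x + mon a2m 2 E1 x with hc20
  have Nc20 : Nice c20 := (N0.deriv'.mon' a30 3).add' (NE1.mon' a2m 2)
  set c22 : ℝ → ℝ := mon a2p 1 (deriv E1) with hc22
  have Nc22 : Nice c22 := NE1.deriv'.mon' a2p 1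
  have hrep2 : ∀ x y : ℝ, φ2 x y = ∑ j ∈ Finset.range 3, y ^ j * cf [c20, z, c22] j x := by
    intro x y
    simp only [φ2, Q3, Q2, ψ, Qzero, Qone, Qplus, Qminus, deriv_const]
    rw [hd1ψ1, hd2ψ1]
    simp [cf, Finset.sum_range_succ, hc20, hc22, mon, hz]
    ring
  have hcl2 : ∀ f ∈ [c20, z, c22], Nice f := by
    intro f hf; fin_cases hf
    · exact Nc20
    · exact Nz
    · exact Nc22
  -- claim 3
  have claim3 : ∀ x y : ℝ, P0 φ2 x y
      = Qzero a30 3 ψ x y + Qminus a2m 2 (P (Qplus a2p 2 ψ)) x y := by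
    intro x y
    rw [hP0 φ2 2 (cf [c20, z, c22]) (nice_cf _ hcl2) hrep2 x y]
    simp only [Qzero, Qminus, ψ]
    rw [hd2u]
    simp [cf, hc20, mon]
    ring
  -- ψ2 formula
  set E2 : ℝ → ℝ := pm (2 * a11) c22 with hE2
  have NE2 : Nice E2 := Nc22.pm' _
  have hψ2 : ∀ x y : ℝ, ψ2 x y = y ^ 2 * E2 x := by
    intro x y
    simp only [ψ2]
    rw [hP φ2 2 (cf [c20, z, c22]) (nice_cf _ hcl2) hrep2 x y]
    rw [show (2:ℕ) = 1 + 1 from rfl, Finset.sum_Icc_succ_top (by norm_num)]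
    simp [cf, hE2, pm, hz]
    ring
  have hd1ψ2 : ∀ y x : ℝ, deriv (fun x' => ψ2 x' y) x = y ^ 2 * deriv E2 x := by
    intro y x
    rw [show (fun x' => ψ2 x' y) = fun x' => y ^ 2 * E2 x' from funext fun x' => hψ2 x' y]
    exact deriv_cmul NE2.diff _ x
  have hd2ψ2 : ∀ x y : ℝ, deriv (fun y' => ψ2 x y') y = 2 * y * E2 x := by
    intro x y
    rw [show (fun y' => ψ2 x y') = fun y' => y' ^ 2 * E2 x from
      funext fun y' => by rw [hψ2]]
    exact deriv_sq _ y
  -- φ3 representation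
  set c31 : ℝ → ℝ := fun x => mon a4p 3 (deriv ψ0) x + mon a30 3 (deriv E1) x
      + mon a31 2 E1 x + mon (2 * a2m) 2 E2 x with hc31
  have Nc31 : Nice c31 :=
    (((N0.deriv'.mon' a4p 3).add' (NE1.deriv'.mon' a30 3)).add' (NE1.mon' a31 2)).add'
      (NE2.mon' (2 * a2m) 2)
  set c33 : ℝ → ℝ := mon a2p 1 (deriv E2) with hc33
  have Nc33 : Nice c33 := NE2.deriv'.mon' a2p 1
  have hrep3 : ∀ x y : ℝ, φ3 x y = ∑ j ∈ Finset.range 4, y ^ j * cf [z, c31, z, c33] j x := by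
    intro x y
    simp only [φ3, Q4, Q3, Q2, ψ, Qzero, Qone, Qplus, Qminus, deriv_const]
    rw [hd1ψ1, hd2ψ1, hd1ψ2, hd2ψ2]
    simp [cf, Finset.sum_range_succ, hc31, hc33, mon, hz]
    ring
  have hcl3 : ∀ f ∈ [z, c31, z, c33], Nice f := by
    intro f hf; fin_cases hf
    · exact Nz
    · exact Nc31
    · exact Nz
    · exact Nc33
  -- claim 2
  have claim2 : ∀ x y : ℝ, P0 φ3 x y = 0 := by
    intro x y
    rw [hP0 φ3 3 (cf [z, c31, z, c33]) (nice_cf _ hcl3) hrep3 x y]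
    simp [cf, hz]
  -- ψ3 formula
  set E3 : ℝ → ℝ := pm (1 * a11) c31 with hE3
  have NE3 : Nice E3 := Nc31.pm' _
  set E4 : ℝ → ℝ := pm (3 * a11) c33 with hE4
  have NE4 : Nice E4 := Nc33.pm' _
  have hψ3 : ∀ x y : ℝ, ψ3 x y = y * E3 x + y ^ 3 * E4 x := by
    intro x y
    simp only [ψ3]
    rw [hP φ3 3 (cf [z, c31, z, c33]) (nice_cf _ hcl3) hrep3 x y]
    rw [show (3:ℕ) = 2 + 1 from rfl, Finset.sum_Icc_succ_top (by norm_num),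
      show (2:ℕ) = 1 + 1 from rfl, Finset.sum_Icc_succ_top (by norm_num)]
    simp [cf, hE3, hE4, pm, hz]
    ring
  have hd1ψ3 : ∀ y x : ℝ, deriv (fun x' => ψ3 x' y) x
      = y * deriv E3 x + y ^ 3 * deriv E4 x := by
    intro y x
    rw [show (fun x' => ψ3 x' y) = fun x' => y * E3 x' + y ^ 3 * E4 x' from
      funext fun x' => hψ3 x' y]
    exact deriv_cmul2 NE3.diff NE4.diff _ _ x
  have hd2ψ3 : ∀ x y : ℝ, deriv (fun y' => ψ3 x y') y = E3 x + 3 * y ^ 2 * E4 x := by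
    intro x y
    rw [show (fun y' => ψ3 x y') = fun y' => y' * E3 x + y' ^ 3 * E4 x from
      funext fun y' => by rw [hψ3]]
    exact deriv_lin_cube _ _ y
  -- φ4 representation
  set c40 : ℝ → ℝ := fun x => mon a50 5 (deriv ψ0) x + mon a4m 4 E1 x + mon a2m 2 E3 x
    with hc40
  have Nc40 : Nice c40 :=
    ((N0.deriv'.mon' a50 5).add' (NE1.mon' a4m 4)).add' (NE3.mon' a2m 2)
  set c42 : ℝ → ℝ := fun x => mon a4p 3 (deriv E1) x + mon a30 3 (deriv E2) x
      + mon (2 * a31) 2 E2 x + mon a2p 1 (deriv E3) x + mon (3 * a2m) 2 E4 x with hc42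
  have Nc42 : Nice c42 :=
    ((((NE1.deriv'.mon' a4p 3).add' (NE2.deriv'.mon' a30 3)).add'
      (NE2.mon' (2 * a31) 2)).add' (NE3.deriv'.mon' a2p 1)).add' (NE4.mon' (3 * a2m) 2)
  set c44 : ℝ → ℝ := mon a2p 1 (deriv E4) with hc44
  have Nc44 : Nice c44 := NE4.deriv'.mon' a2p 1
  have hrep4 : ∀ x y : ℝ, φ4 x y
      = ∑ j ∈ Finset.range 5, y ^ j * cf [c40, z, c42, z, c44] j x := by
    intro x y
    simp only [φ4, Q5, Q4, Q3, Q2, ψ, Qzero, Qone, Qplus, Qminus, deriv_const]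
    rw [hd1ψ1, hd2ψ1, hd1ψ2, hd2ψ2, hd1ψ3, hd2ψ3]
    simp [cf, Finset.sum_range_succ, hc40, hc42, hc44, mon, hz]
    ring
  have hcl4 : ∀ f ∈ [c40, z, c42, z, c44], Nice f := by
    intro f hf; fin_cases hf
    · exact Nc40
    · exact Nz
    · exact Nc42
    · exact Nz
    · exact Nc44
  -- RHS pieces for claim 4
  -- v := P (Qplus a4p 4 ψ)
  set g2 : ℝ → ℝ := mon a4p 3 (deriv ψ0) with hg2
  have Ng2 : Nice g2 := N0.deriv'.mon' a4p 3
  have hclg2 : ∀ f ∈ [z, g2], Nice f := by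
    intro f hf; fin_cases hf
    · exact Nz
    · exact Ng2
  have hrepv : ∀ x y : ℝ, Qplus a4p 4 ψ x y
      = ∑ j ∈ Finset.range 2, y ^ j * cf [z, g2] j x := by
    intro x y
    simp only [ψ, Qplus]
    simp [cf, Finset.sum_range_succ, hg2, mon, hz]
    ring
  set F2 : ℝ → ℝ := pm (1 * a11) g2 with hF2
  have hv : ∀ x y : ℝ, P (Qplus a4p 4 ψ) x y = y * F2 x := by
    intro x y
    rw [hP (Qplus a4p 4 ψ) 1 (cf [z, g2]) (nice_cf _ hclg2) hrepv x y]
    simp [cf, hF2, pm]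
    ring
  have hd2v : ∀ x y : ℝ, deriv (fun y' => P (Qplus a4p 4 ψ) x y') y = F2 x := by
    intro x y
    rw [show (fun y' => P (Qplus a4p 4 ψ) x y') = fun y' => y' * F2 x from
      funext fun y' => by rw [hv]]
    exact deriv_lin _ y
  -- w := P (Qone a31 3 u)
  set g4 : ℝ → ℝ := mon a31 2 E1 with hg4
  have Ng4 : Nice g4 := NE1.mon' a31 2
  have hclg4 : ∀ f ∈ [z, g4], Nice f := by
    intro f hf; fin_cases hf
    · exact Nz
    · exact Ng4
  have hrepw : ∀ x y : ℝ, Qone a31 3 u x y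
      = ∑ j ∈ Finset.range 2, y ^ j * cf [z, g4] j x := by
    intro x y
    simp only [Qone]
    rw [hd2u]
    simp [cf, Finset.sum_range_succ, hg4, mon, hz]
    ring
  set F4 : ℝ → ℝ := pm (1 * a11) g4 with hF4
  have hw : ∀ x y : ℝ, P (Qone a31 3 u) x y = y * F4 x := by
    intro x y
    rw [hP (Qone a31 3 u) 1 (cf [z, g4]) (nice_cf _ hclg4) hrepw x y]
    simp [cf, hF4, pm]
    ring
  have hd2w : ∀ x y : ℝ, deriv (fun y' => P (Qone a31 3 u) x y') y = F4 x := by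
    intro x y
    rw [show (fun y' => P (Qone a31 3 u) x y') = fun y' => y' * F4 x from
      funext fun y' => by rw [hw]]
    exact deriv_lin _ y
  -- s := P (Qplus a2p 2 u)
  have hcls : ∀ f ∈ [z, z, c22], Nice f := by
    intro f hf; fin_cases hf
    · exact Nz
    · exact Nz
    · exact Nc22
  have hreps : ∀ x y : ℝ, Qplus a2p 2 u x y
      = ∑ j ∈ Finset.range 3, y ^ j * cf [z, z, c22] j x := by
    intro x y
    simp only [Qplus]
    rw [hd1u]
    simp [cf, Finset.sum_range_succ, hc22, mon, hz]
    ring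
  have hs : ∀ x y : ℝ, P (Qplus a2p 2 u) x y = y ^ 2 * E2 x := by
    intro x y
    rw [hP (Qplus a2p 2 u) 2 (cf [z, z, c22]) (nice_cf _ hcls) hreps x y]
    rw [show (2:ℕ) = 1 + 1 from rfl, Finset.sum_Icc_succ_top (by norm_num)]
    simp [cf, hE2, pm, hz]
    ring
  have hd2s : ∀ x y : ℝ, deriv (fun y' => P (Qplus a2p 2 u) x y') y = 2 * y * E2 x := by
    intro x y
    rw [show (fun y' => P (Qplus a2p 2 u) x y') = fun y' => y' ^ 2 * E2 x from
      funext fun y' => by rw [hs]]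
    exact deriv_sq _ y
  -- t := P (inner sum)
  set m5 : ℝ → ℝ := fun x => mon a30 3 (deriv E1) x + mon (2 * a2m) 2 E2 x with hm5
  have Nm5 : Nice m5 := (NE1.deriv'.mon' a30 3).add' (NE2.mon' (2 * a2m) 2)
  have hclm5 : ∀ f ∈ [z, m5], Nice f := by
    intro f hf; fin_cases hf
    · exact Nz
    · exact Nm5
  set G : ℝ → ℝ → ℝ := fun x' y' => Qzero a30 3 u x' y' + Qminus a2m 2 (P (Qplus a2p 2 u)) x' y'
    with hG
  have hrept : ∀ x y : ℝ, G x y = ∑ j ∈ Finset.range 2, y ^ j * cf [z, m5] j x := by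
    intro x y
    simp only [hG, Qzero, Qminus]
    rw [hd1u, hd2s]
    simp [cf, Finset.sum_range_succ, hm5, mon, hz]
    ring
  set F5 : ℝ → ℝ := pm (1 * a11) m5 with hF5
  have ht : ∀ x y : ℝ, P G x y = y * F5 x := by
    intro x y
    rw [hP G 1 (cf [z, m5]) (nice_cf _ hclm5) hrept x y]
    simp [cf, hF5, pm]
    ring
  have hd2t : ∀ x y : ℝ, deriv (fun y' => P G x y') y = F5 x := by
    intro x y
    rw [show (fun y' => P G x y') = fun y' => y' * F5 x from
      funext fun y' => by rw [ht]]
    exact deriv_lin _ y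
  -- claim 4
  have claim4 : ∀ x y : ℝ, P0 φ4 x y
      = Qzero a50 5 ψ x y
        + Qminus a2m 2 (P (Qplus a4p 4 ψ)) x y
        + Qminus a4m 4 (P (Qplus a2p 2 ψ)) x y
        + Qminus a2m 2 (P (Qone a31 3 (P (Qplus a2p 2 ψ)))) x y
        + Qminus a2m 2 (P (fun x' y' =>
            Qzero a30 3 (P (Qplus a2p 2 ψ)) x' y'
              + Qminus a2m 2 (P (Qplus a2p 2 (P (Qplus a2p 2 ψ)))) x' y')) x y := by
    intro x y
    rw [hP0 φ4 4 (cf [c40, z, c42, z, c44]) (nice_cf _ hcl4) hrep4 x y]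
    have hGeq : (fun x' y' =>
        Qzero a30 3 (P (Qplus a2p 2 ψ)) x' y'
          + Qminus a2m 2 (P (Qplus a2p 2 (P (Qplus a2p 2 ψ)))) x' y') = G := by
      rw [hG, hu0]
    rw [hGeq]
    simp only [Qzero, Qminus, ψ]
    rw [hd2v, hd2u, hd2w, hd2t]
    simp [cf, hc40, hc31, hm5, hg2, hg4, hE3, hF2, hF4, hF5, pm, mon]
    ring
  exact ⟨claim1, claim2, claim3, claim4⟩
end

section
/- Fix real constants a_k^+, a_k^- for even k and a_k^0, a_k^1 for odd k with a₁^1 ≠ 0, and define the operators 𝒬_k^{±}, 𝒬_k^{0}, 𝒬_k^{1} and P as in the context. Then for every f ∈ V, all even integers j, k ≥ 2 and all (x,y) ∈ ℝ²: 𝒬_k^- P 𝒬_j^+ f(x,y) = −(a_k^-·a_j^+ / a₁^1)·x^{k+j−1}·∂₁f(x,y), and 𝒬₂^- P 𝒬₃^1 P 𝒬₂^+ f(x,y) = (a₂^-·a₃^1·a₂^+ / (a₁^1)²)·x^5·∂₁f(x,y). -/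
open Finset

/-- Derivative in `y` of a polynomial in `y` with constant coefficients. -/
lemma hasDerivAt_polyY (s : Finset ℕ) (e : ℕ → ℝ) (y : ℝ) :
    HasDerivAt (fun y' : ℝ => ∑ i ∈ s, y' ^ i * e i)
      (∑ i ∈ s, (i : ℝ) * y ^ (i - 1) * e i) y := by
  apply HasDerivAt.fun_sum
  intro i _
  exact (hasDerivAt_pow i y).mul_const (e i)

/-- Derivative in `x` of a polynomial in `y` with differentiable coefficients. -/
lemma deriv_polyX (s : Finset ℕ) (e : ℕ → ℝ → ℝ) (he : ∀ i, Differentiable ℝ (e i))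
    (y x : ℝ) :
    deriv (fun x' => ∑ i ∈ s, y ^ i * e i x') x = ∑ i ∈ s, y ^ i * deriv (e i) x := by
  apply HasDerivAt.deriv
  apply HasDerivAt.fun_sum
  intro i _
  exact ((he i x).hasDerivAt).const_mul (y ^ i)

/-- For `f ∈ V` and even `j, k ≥ 2`:
`𝒬ₖ⁻ P 𝒬ⱼ⁺ f = −(aₖ⁻·aⱼ⁺/a₁¹)·x^{k+j−1}·∂₁f`, and
`𝒬₂⁻ P 𝒬₃¹ P 𝒬₂⁺ f = (a₂⁻·a₃¹·a₂⁺/(a₁¹)²)·x⁵·∂₁f`.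
Here `P` is characterised on `V` by `P(∑_{j≤r} y^j c_j) = −∑_{j=1}^r y^j c_j/(j·a₁¹)`. -/
theorem Qminus_P_Qplus_combinations
    (ap am : ℕ → ℝ) (a31 a11 : ℝ) (ha11 : a11 ≠ 0)
    (P : (ℝ → ℝ → ℝ) → ℝ → ℝ → ℝ)
    (hP : ∀ (g : ℝ → ℝ → ℝ) (r : ℕ) (c : ℕ → ℝ → ℝ),
      (∀ j, ContDiff ℝ (⊤ : ℕ∞) (c j) ∧ HasCompactSupport (c j)) →
      (∀ x y : ℝ, g x y = ∑ j ∈ Finset.range (r + 1), y ^ j * c j x) →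
      ∀ x y : ℝ, P g x y = -∑ j ∈ Finset.Icc 1 r, y ^ j * c j x / ((j : ℝ) * a11))
    (f : ℝ → ℝ → ℝ) (r : ℕ) (c : ℕ → ℝ → ℝ)
    (hc : ∀ j, ContDiff ℝ (⊤ : ℕ∞) (c j) ∧ HasCompactSupport (c j))
    (hf : ∀ x y : ℝ, f x y = ∑ j ∈ Finset.range (r + 1), y ^ j * c j x) :
    (∀ k j : ℕ, 2 ≤ k → 2 ≤ j → Even k → Even j → ∀ x y : ℝ,
      Qminus (am k) k (P (Qplus (ap j) j f)) x y
        = -(am k * ap j / a11) * x ^ (k + j - 1) * deriv (fun x' => f x' y) x) ∧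
    (∀ x y : ℝ,
      Qminus (am 2) 2 (P (Qone a31 3 (P (Qplus (ap 2) 2 f)))) x y
        = (am 2 * a31 * ap 2 / a11 ^ 2) * x ^ 5 * deriv (fun x' => f x' y) x) := by
  have hcd : ∀ i, Differentiable ℝ (c i) := fun i => (hc i).1.differentiable (by simp)
  have hcderiv : ∀ i, ContDiff ℝ (⊤ : ℕ∞) (deriv (c i)) := by
    intro i
    have h2 : ContDiff ℝ (((⊤ : ℕ∞) : WithTop ℕ∞) + 1) (c i) := (hc i).1
    exact (contDiff_succ_iff_deriv.mp h2).2.2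
  -- derivative of `f` in the first variable
  have hderivf : ∀ x y : ℝ, deriv (fun x' => f x' y) x
      = ∑ i ∈ range (r + 1), y ^ i * deriv (c i) x := by
    intro x y
    have : (fun x' => f x' y) = fun x' => ∑ i ∈ range (r + 1), y ^ i * c i x' := by
      funext x'; exact hf x' y
    rw [this, deriv_polyX _ _ hcd]
  -- coefficients of `Qplus (ap j) j f`, valid for any `b : ℝ`, `p : ℕ`
  -- general representation of `b * x^p * y * ∂₁f` as a polynomial in `y`
  have key : ∀ (b : ℝ) (p : ℕ) (g : ℝ → ℝ → ℝ),
      (∀ x y : ℝ, g x y = b * x ^ p * y * deriv (fun x' => f x' y) x) →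
      ∀ x y : ℝ, deriv (fun y' => P g x y') y
        = -(b * x ^ p / a11) * deriv (fun x' => f x' y) x := by
    intro b p g hg
    set d : ℕ → ℝ → ℝ := fun i => match i with
      | 0 => fun _ => 0
      | (m + 1) => fun x => b * x ^ p * deriv (c m) x with hd
    have hdprop : ∀ i, ContDiff ℝ (⊤ : ℕ∞) (d i) ∧ HasCompactSupport (d i) := by
      intro i
      match i with
      | 0 =>
        constructor
        · exact contDiff_const
        · show HasCompactSupport (fun _ : ℝ => (0:ℝ))
          simp [HasCompactSupport, tsupport]
      | m + 1 =>
        constructor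
        · exact ((contDiff_const.mul (contDiff_id.pow p)).mul (hcderiv m))
        · have h1 : HasCompactSupport (deriv (c m)) := (hc m).2.deriv
          have := h1.mul_left (f := fun x : ℝ => b * x ^ p)
          exact this
    have hrep : ∀ x y : ℝ, g x y = ∑ i ∈ range (r + 1 + 1), y ^ i * d i x := by
      intro x y
      rw [hg x y, hderivf x y,
        Finset.sum_range_succ' (fun i => y ^ i * d i x) (r + 1)]
      simp only [hd, pow_zero, one_mul, mul_zero, add_zero]
      rw [Finset.mul_sum]
      exact Finset.sum_congr rfl fun i _ => by ring
    intro x y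
    have hPg : (fun y' => P g x y')
        = fun y' => -∑ i ∈ Icc 1 (r + 1), y' ^ i * (d i x / ((i : ℝ) * a11)) := by
      funext y'
      rw [hP g (r + 1) d hdprop hrep x y']
      congr 1
      exact Finset.sum_congr rfl fun i _ => by ring
    rw [hPg, ((hasDerivAt_polyY (Icc 1 (r + 1)) (fun i => d i x / ((i : ℝ) * a11)) y).fun_neg).deriv]
    have hsum : ∑ i ∈ Icc 1 (r + 1), (i : ℝ) * y ^ (i - 1) * (d i x / ((i : ℝ) * a11))
        = ∑ i ∈ Icc 1 (r + 1), y ^ (i - 1) * d i x / a11 := by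
      refine Finset.sum_congr rfl fun i hi => ?_
      have hi1 : 1 ≤ i := (Finset.mem_Icc.mp hi).1
      have hne : (i : ℝ) ≠ 0 := Nat.cast_ne_zero.mpr (by omega)
      field_simp
    rw [hsum]
    rw [← Finset.Ico_add_one_right_eq_Icc, Finset.sum_Ico_eq_sum_range]
    have hstep : ∀ i ∈ range (r + 1), y ^ (1 + i - 1) * d (1 + i) x / a11
        = y ^ i * (b * x ^ p * deriv (c i) x) / a11 := by
      intro i _
      have h1 : 1 + i - 1 = i := by omega
      have h2 : d (1 + i) = fun x => b * x ^ p * deriv (c i) x := by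
        rw [Nat.add_comm]
      rw [h1, h2]
    have hre : ∑ i ∈ range (r + 1 + 1 - 1), y ^ (1 + i - 1) * d (1 + i) x / a11
        = ∑ i ∈ range (r + 1), y ^ i * (b * x ^ p * deriv (c i) x) / a11 :=
      Finset.sum_congr (by norm_num) hstep
    rw [hre, hderivf x y, neg_mul, neg_inj, Finset.mul_sum]
    exact Finset.sum_congr rfl fun i _ => by ring
  constructor
  · intro k j hk hj _ _ x y
    have hg : ∀ x y : ℝ, Qplus (ap j) j f x y
        = ap j * x ^ (j - 1) * y * deriv (fun x' => f x' y) x := fun _ _ => rfl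
    have h1 := key (ap j) (j - 1) (Qplus (ap j) j f) hg x y
    show am k * x ^ k * deriv (fun y' => P (Qplus (ap j) j f) x y') y = _
    rw [h1]
    have hx : x ^ (k + j - 1) = x ^ k * x ^ (j - 1) := by
      rw [← pow_add]; congr 1; omega
    rw [hx]; ring
  · intro x y
    have hg : ∀ x y : ℝ, Qplus (ap 2) 2 f x y
        = ap 2 * x ^ (2 - 1) * y * deriv (fun x' => f x' y) x := fun _ _ => rfl
    have h1 := key (ap 2) (2 - 1) (Qplus (ap 2) 2 f) hg
    have hg2 : ∀ x y : ℝ, Qone a31 3 (P (Qplus (ap 2) 2 f)) x y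
        = (-(a31 * ap 2 / a11)) * x ^ 3 * y * deriv (fun x' => f x' y) x := by
      intro x y
      show a31 * x ^ (3 - 1) * y * deriv (fun y' => P (Qplus (ap 2) 2 f) x y') y = _
      rw [h1 x y]
      norm_num
      ring
    have h2 := key (-(a31 * ap 2 / a11)) 3 (Qone a31 3 (P (Qplus (ap 2) 2 f))) hg2 x y
    show am 2 * x ^ 2 * deriv (fun y' => P (Qone a31 3 (P (Qplus (ap 2) 2 f))) x y') y = _
    rw [h2]
    have hx : x ^ 5 = x ^ 2 * x ^ 3 := by ring
    rw [hx]; ring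
end

section
/- Let β, B > 0 satisfy β = cosh²(βB), and define the operators Q₂⁺, Q₂⁻, Q₃⁰ and P as in the context. Then for every f ∈ V and all (x,y) ∈ ℝ²: Q₃⁰f(x,y) + Q₂⁻(P(Q₂⁺f))(x,y) = (2/3)·β·(2β − 3)·cosh(βB)·x³·∂₁f(x,y). -/
lemma deriv_contDiff {g : ℝ → ℝ} (h : ContDiff ℝ (⊤ : ℕ∞) g) : ContDiff ℝ (⊤ : ℕ∞) (deriv g) :=
  (contDiff_infty_iff_deriv.mp h).2

lemma alg_aux (β ch s x D : ℝ) (hch : ch ≠ 0) (h1 : s^2 = β - 1) (h2 : ch^2 = β) :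
    -(2/3)*β^2*ch*x^3*D + (-2*β*s)*x^2*((-2*β*s)*x*D/(2*ch)) = (2/3)*β*(2*β-3)*ch*x^3*D := by
  linear_combination (2*β^2*x^3*D/ch) * h1 + ((2*β - 2*β^2)*x^3*D/ch) * h2
    + ((2*β^2-2*β)*x^3*D*ch) * (mul_inv_cancel₀ hch)

lemma icc_aux (f : ℕ → ℝ) (r : ℕ) :
    ∑ j ∈ Finset.Icc 1 (r+1), f j = ∑ j ∈ Finset.range (r+1), f (j+1) := by
  rw [← Finset.Ico_add_one_right_eq_Icc, Finset.sum_Ico_eq_sum_range]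
  simp [Nat.add_comm]

/-- On the critical curve `β = cosh²(βB)`, for every `f ∈ V`:
`Q₃⁰f + Q₂⁻(P(Q₂⁺f)) = (2/3)·β·(2β−3)·cosh(βB)·x³·∂₁f`.
Here `Q₂⁺ = Qplus (−2β·sinh(βB)) 2`, `Q₂⁻ = Qminus (−2β·sinh(βB)) 2`,
`Q₃⁰ = Qzero (−(2/3)β²·cosh(βB)) 3`, and `P` is characterised on `V` by
`P(∑_{j≤r} y^j c_j) = ∑_{j=1}^r y^j c_j/(2·j·cosh(βB))`. -/
theorem limiting_drift_critical_curve
    (β B : ℝ) (hβ : 0 < β) (hB : 0 < B)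
    (hcrit : β = Real.cosh (β * B) ^ 2)
    (P : (ℝ → ℝ → ℝ) → ℝ → ℝ → ℝ)
    (hP : ∀ (g : ℝ → ℝ → ℝ) (r : ℕ) (c : ℕ → ℝ → ℝ),
      (∀ j, ContDiff ℝ (⊤ : ℕ∞) (c j) ∧ HasCompactSupport (c j)) →
      (∀ x y : ℝ, g x y = ∑ j ∈ Finset.range (r + 1), y ^ j * c j x) →
      ∀ x y : ℝ, P g x y
        = ∑ j ∈ Finset.Icc 1 r, y ^ j * c j x / (2 * (j : ℝ) * Real.cosh (β * B)))
    (f : ℝ → ℝ → ℝ) (r : ℕ) (c : ℕ → ℝ → ℝ)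
    (hc : ∀ j, ContDiff ℝ (⊤ : ℕ∞) (c j) ∧ HasCompactSupport (c j))
    (hf : ∀ x y : ℝ, f x y = ∑ j ∈ Finset.range (r + 1), y ^ j * c j x) :
    ∀ x y : ℝ,
      Qzero (-(2 / 3) * β ^ 2 * Real.cosh (β * B)) 3 f x y
        + Qminus (-2 * β * Real.sinh (β * B)) 2
            (P (Qplus (-2 * β * Real.sinh (β * B)) 2 f)) x y
      = (2 / 3) * β * (2 * β - 3) * Real.cosh (β * B) * x ^ 3
          * deriv (fun x' => f x' y) x := by
  have hch0 : Real.cosh (β * B) ≠ 0 := ne_of_gt (Real.cosh_pos (x := β * B))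
  set ch : ℝ := Real.cosh (β * B) with hch
  set s : ℝ := Real.sinh (β * B) with hs
  set a : ℝ := -2 * β * s with ha
  have hcdiff : ∀ j, Differentiable ℝ (c j) := fun j => (hc j).1.differentiable (by simp)
  -- first-variable derivative of f
  have hder1 : ∀ (x y : ℝ), deriv (fun x' => f x' y) x
      = ∑ j ∈ Finset.range (r + 1), y ^ j * deriv (c j) x := by
    intro x y
    have hfy : (fun x' => f x' y) = fun x' => ∑ j ∈ Finset.range (r+1), y ^ j * c j x' :=
      funext fun x' => hf x' y
    rw [hfy, deriv_fun_sum fun j _ => ((hcdiff j) x).const_mul _]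
    exact Finset.sum_congr rfl fun j _ => deriv_const_mul _ ((hcdiff j) x)
  -- coefficients of Q₂⁺ f
  set d : ℕ → ℝ → ℝ := fun j z => if j = 0 then 0 else a * z * deriv (c (j-1)) z with hd_def
  have hd : ∀ j, ContDiff ℝ (⊤ : ℕ∞) (d j) ∧ HasCompactSupport (d j) := by
    intro j
    cases j with
    | zero =>
      constructor
      · simpa [hd_def] using (contDiff_const : ContDiff ℝ (⊤ : ℕ∞) (fun _ : ℝ => (0:ℝ)))
      · have : d 0 = (0 : ℝ → ℝ) := by funext z; simp [hd_def]
        rw [this]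
        exact HasCompactSupport.zero
    | succ n =>
      have hdn : d (n+1) = fun z => (a * z) * deriv (c n) z := by
        funext z; simp [hd_def, mul_assoc]
      constructor
      · rw [hdn]
        exact (contDiff_const.mul contDiff_id).mul (deriv_contDiff (hc n).1)
      · rw [hdn]
        exact ((hc n).2.deriv).mul_left
  have hg : ∀ x y : ℝ, Qplus a 2 f x y = ∑ j ∈ Finset.range (r+2), y ^ j * d j x := by
    intro x y
    rw [Finset.sum_range_succ']
    simp only [hd_def, Nat.succ_ne_zero, if_neg, Nat.add_sub_cancel, if_pos rfl, pow_zero,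
      Nat.succ_sub_one, reduceIte]
    rw [Qplus, hder1, Finset.mul_sum]
    simp only [mul_zero, one_mul, add_zero]
    refine Finset.sum_congr rfl fun j _ => ?_
    ring
  have hPg : ∀ x y : ℝ, P (Qplus a 2 f) x y
      = ∑ j ∈ Finset.Icc 1 (r+1), y ^ j * d j x / (2 * (j:ℝ) * ch) :=
    hP _ (r+1) d hd hg
  -- second-variable derivative
  have hder2 : ∀ x y : ℝ, deriv (fun y' => P (Qplus a 2 f) x y') y
      = a * x * (deriv (fun x' => f x' y) x) / (2 * ch) := by
    intro x y
    have h1 : (fun y' => P (Qplus a 2 f) x y')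
        = fun y' => ∑ j ∈ Finset.Icc 1 (r+1), y' ^ j * d j x / (2 * (j:ℝ) * ch) :=
      funext fun y' => hPg x y'
    rw [h1, deriv_fun_sum fun j _ => (((differentiableAt_pow j).mul_const _).div_const _)]
    have step : ∀ j ∈ Finset.Icc 1 (r+1),
        deriv (fun y' => y' ^ j * d j x / (2 * (j:ℝ) * ch)) y
          = y ^ (j-1) * d j x / (2 * ch) := by
      intro j hj
      have hj1 : 1 ≤ j := (Finset.mem_Icc.mp hj).1
      have hjne : (j : ℝ) ≠ 0 := Nat.cast_ne_zero.mpr (by omega)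
      have : (fun y' => y' ^ j * d j x / (2 * (j:ℝ) * ch))
          = fun y' => (y' ^ j) * (d j x / (2 * (j:ℝ) * ch)) := by
        funext y'; ring
      rw [this, deriv_mul_const (differentiableAt_pow j), deriv_pow_field]
      field_simp
    rw [Finset.sum_congr rfl step, icc_aux (fun j => y ^ (j-1) * d j x / (2 * ch)) r]
    have : ∀ j ∈ Finset.range (r+1),
        y ^ (j+1-1) * d (j+1) x / (2*ch) = a * x * (y ^ j * deriv (c j) x) / (2*ch) := by
      intro j _
      simp only [hd_def, Nat.succ_ne_zero, reduceIte, Nat.add_sub_cancel]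
      ring
    rw [Finset.sum_congr rfl this, hder1, Finset.mul_sum, Finset.sum_div]
  intro x y
  rw [Qzero, Qminus, hder2]
  have h1 : s^2 = β - 1 := by rw [hs, Real.sinh_sq, ← hch, ← hcrit]
  have h2 : ch^2 = β := hcrit.symm
  have := alg_aux β ch s x (deriv (fun x' => f x' y) x) hch0 h1 h2
  calc -(2/3)*β^2*ch * x^3 * deriv (fun x' => f x' y) x
        + a * x^2 * (a * x * deriv (fun x' => f x' y) x / (2*ch))
      = -(2/3)*β^2*ch*x^3*(deriv (fun x' => f x' y) x)
        + (-2*β*s)*x^2*((-2*β*s)*x*(deriv (fun x' => f x' y) x)/(2*ch)) := by rw [ha]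
    _ = (2/3)*β*(2*β-3)*ch*x^3*(deriv (fun x' => f x' y) x) := this
    _ = _ := by ring
end

section
/- Let β = 3/2 and B > 0 satisfy cosh²(βB) = 3/2 (the tri-critical point), and define the operators Q₂⁺, Q₂⁻, Q₃⁰, Q₃¹, Q₄⁺, Q₄⁻, Q₅⁰ and P as in the context. Then for every f ∈ V and all (x,y) ∈ ℝ²: Q₃⁰f(x,y) + Q₂⁻PQ₂⁺f(x,y) = 0, and (Q₅⁰ + Q₂⁻PQ₄⁺ + Q₄⁻PQ₂⁺ + Q₂⁻PQ₃¹PQ₂⁺)f(x,y) = −(9/10)·√(3/2)·x⁵·∂₁f(x,y). -/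
section Helpers
open Finset

lemma deriv_poly_sum (n : ℕ) (c : ℕ → ℝ → ℝ) (hc : ∀ j, Differentiable ℝ (c j)) (x y : ℝ) :
    deriv (fun x' => ∑ j ∈ range n, y ^ j * c j x') x
      = ∑ j ∈ range n, y ^ j * deriv (c j) x := by
  rw [deriv_fun_sum (fun j _ => ((hc j) x).const_mul _)]
  exact Finset.sum_congr rfl fun j _ => deriv_const_mul _ ((hc j) x)

lemma keyP (β B : ℝ) (P : (ℝ → ℝ → ℝ) → ℝ → ℝ → ℝ)
    (hP : ∀ (g : ℝ → ℝ → ℝ) (r : ℕ) (c : ℕ → ℝ → ℝ),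
      (∀ j, ContDiff ℝ (⊤ : ℕ∞) (c j) ∧ HasCompactSupport (c j)) →
      (∀ x y : ℝ, g x y = ∑ j ∈ Finset.range (r + 1), y ^ j * c j x) →
      ∀ x y : ℝ, P g x y
        = ∑ j ∈ Finset.Icc 1 r, y ^ j * c j x / (2 * (j : ℝ) * Real.cosh (β * B)))
    (a : ℝ) (p n : ℕ) (e : ℕ → ℝ → ℝ)
    (he : ∀ j, ContDiff ℝ (⊤ : ℕ∞) (e j) ∧ HasCompactSupport (e j))
    (g : ℝ → ℝ → ℝ)
    (hg : ∀ x y, g x y = ∑ j ∈ Finset.range (n+1), y^(j+1) * (a * x^p * e j x)) :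
    ∀ x y, deriv (fun y' => P g x y') y
      = a * x^p / (2 * Real.cosh (β*B)) * ∑ j ∈ Finset.range (n+1), y^j * e j x := by
  intro x y
  have hchne : Real.cosh (β*B) ≠ 0 := ne_of_gt (Real.cosh_pos _)
  set ch := Real.cosh (β*B) with hch
  set d : ℕ → ℝ → ℝ := fun j x => if j = 0 then 0 else a * x^p * e (j-1) x with hd_def
  have hd : ∀ j, ContDiff ℝ (⊤ : ℕ∞) (d j) ∧ HasCompactSupport (d j) := by
    intro j
    match j with
    | 0 =>
      have h0 : d 0 = (fun _ : ℝ => (0:ℝ)) := by funext x; simp [hd_def]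
      rw [h0]
      exact ⟨contDiff_const, HasCompactSupport.intro isCompact_empty (fun x _ => rfl)⟩
    | (k+1) =>
      constructor
      · simp only [hd_def]
        simpa using ((contDiff_const.mul (contDiff_id.pow p)).mul (he k).1)
      · have : d (k+1) = (fun x : ℝ => a * x^p) * e k := by
          funext x; simp [hd_def]
        rw [this]
        exact ((he k).2).mul_left
  have hrep : ∀ x y, g x y = ∑ j ∈ Finset.range (n+1+1), y^j * d j x := by
    intro x y
    rw [Finset.sum_range_succ', hg]
    simp [hd_def]
  have hPg := hP g (n+1) d hd hrep
  have hfun : (fun y' => P g x y')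
      = fun y' => ∑ j ∈ Finset.Icc 1 (n+1), y'^j * d j x / (2*(j:ℝ)*ch) :=
    funext fun y' => hPg x y'
  rw [hfun, deriv_fun_sum (fun j _ => (((differentiableAt_id.pow j).mul_const _).div_const _))]
  have hterm : ∀ j ∈ Finset.Icc 1 (n+1),
      deriv (fun y' : ℝ => y'^j * d j x / (2*(j:ℝ)*ch)) y = y^(j-1) * d j x / (2*ch) := by
    intro j hj
    have hj1 : (1:ℕ) ≤ j := (Finset.mem_Icc.mp hj).1
    have hjne : (j:ℝ) ≠ 0 := Nat.cast_ne_zero.mpr (by omega)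
    rw [deriv_div_const, deriv_mul_const (differentiableAt_id.pow j), deriv_pow_field]
    field_simp
  rw [Finset.sum_congr rfl hterm]
  have : Finset.Icc 1 (n+1) = Finset.Ico 1 (n+2) := by
    rw [← Finset.Ico_add_one_right_eq_Icc]
    rfl
  rw [this, Finset.sum_Ico_eq_sum_range]
  simp only [Nat.add_sub_cancel_left, Nat.add_sub_cancel]
  have : ∀ i ∈ Finset.range (n+2-1), y^i * d (1+i) x / (2*ch)
      = a * x^p / (2*ch) * (y^i * e i x) := by
    intro i _
    have : d (1+i) = fun x => a * x^p * e i x := by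
      funext x; simp [hd_def, Nat.add_sub_cancel_left]
    rw [this]
    ring
  rw [Finset.sum_congr rfl this, ← Finset.mul_sum]
  norm_num

end Helpers
open Finset



/-- At the tri-critical point `β = 3/2`, `cosh²(βB) = 3/2`,
for every `f ∈ V`: `Q₃⁰f + Q₂⁻PQ₂⁺f = 0` and
`(Q₅⁰ + Q₂⁻PQ₄⁺ + Q₄⁻PQ₂⁺ + Q₂⁻PQ₃¹PQ₂⁺)f = −(9/10)·√(3/2)·x⁵·∂₁f`. -/
theorem limiting_drift_tricritical_point
    (β B : ℝ) (hβ : β = 3 / 2) (hB : 0 < B)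
    (htc : Real.cosh (β * B) ^ 2 = 3 / 2)
    (P : (ℝ → ℝ → ℝ) → ℝ → ℝ → ℝ)
    (hP : ∀ (g : ℝ → ℝ → ℝ) (r : ℕ) (c : ℕ → ℝ → ℝ),
      (∀ j, ContDiff ℝ (⊤ : ℕ∞) (c j) ∧ HasCompactSupport (c j)) →
      (∀ x y : ℝ, g x y = ∑ j ∈ Finset.range (r + 1), y ^ j * c j x) →
      ∀ x y : ℝ, P g x y
        = ∑ j ∈ Finset.Icc 1 r, y ^ j * c j x / (2 * (j : ℝ) * Real.cosh (β * B)))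
    (f : ℝ → ℝ → ℝ) (r : ℕ) (c : ℕ → ℝ → ℝ)
    (hc : ∀ j, ContDiff ℝ (⊤ : ℕ∞) (c j) ∧ HasCompactSupport (c j))
    (hf : ∀ x y : ℝ, f x y = ∑ j ∈ Finset.range (r + 1), y ^ j * c j x) :
    (∀ x y : ℝ,
      Qzero (-(2 / 3) * β ^ 2 * Real.cosh (β * B)) 3 f x y
        + Qminus (-2 * β * Real.sinh (β * B)) 2
            (P (Qplus (-2 * β * Real.sinh (β * B)) 2 f)) x y = 0) ∧
    (∀ x y : ℝ,
      Qzero (-(1 / 15) * β ^ 4 * Real.cosh (β * B)) 5 f x y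
        + Qminus (-2 * β * Real.sinh (β * B)) 2
            (P (Qplus (-(1 / 3) * β ^ 3 * Real.sinh (β * B)) 4 f)) x y
        + Qminus (-(1 / 3) * β ^ 3 * Real.sinh (β * B)) 4
            (P (Qplus (-2 * β * Real.sinh (β * B)) 2 f)) x y
        + Qminus (-2 * β * Real.sinh (β * B)) 2
            (P (Qone (-(β ^ 2 * Real.cosh (β * B))) 3
              (P (Qplus (-2 * β * Real.sinh (β * B)) 2 f)))) x y
      = -(9 / 10) * Real.sqrt (3 / 2) * x ^ 5 * deriv (fun x' => f x' y) x) := by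
  have hchpos : (0:ℝ) < Real.cosh (β * B) := Real.cosh_pos _
  set ch := Real.cosh (β * B) with hch
  set sh := Real.sinh (β * B) with hsh
  have hchne : ch ≠ 0 := ne_of_gt hchpos
  have hsh2 : sh ^ 2 = 1 / 2 := by
    have h := Real.cosh_sq_sub_sinh_sq (β * B)
    rw [← hch, ← hsh] at h
    nlinarith
  have hsqrt : Real.sqrt (3 / 2) = ch := by
    rw [← htc, Real.sqrt_sq hchpos.le]
  set e : ℕ → ℝ → ℝ := fun j => deriv (c j) with he_def
  have he : ∀ j, ContDiff ℝ (⊤ : ℕ∞) (e j) ∧ HasCompactSupport (e j) := fun j =>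
    ⟨(contDiff_infty_iff_deriv.mp (hc j).1).2, (hc j).2.deriv⟩
  have hcd : ∀ j, Differentiable ℝ (c j) := fun j => (hc j).1.differentiable (by simp)
  have hS : ∀ x y : ℝ, deriv (fun x' => f x' y) x = ∑ j ∈ range (r+1), y ^ j * e j x := by
    intro x y
    have hfx : (fun x' => f x' y) = fun x' => ∑ j ∈ range (r+1), y ^ j * c j x' :=
      funext fun x' => hf x' y
    rw [hfx, deriv_poly_sum _ _ hcd]
  set a : ℝ := -2 * β * sh with ha
  set a' : ℝ := -(1/3) * β ^ 3 * sh with ha'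
  set q : ℝ := -(β ^ 2 * ch) with hq
  have hg1 : ∀ x y : ℝ, Qplus a 2 f x y
      = ∑ j ∈ range (r+1), y^(j+1) * (a * x^1 * e j x) := by
    intro x y
    simp only [Qplus]
    rw [hS, Finset.mul_sum]
    exact Finset.sum_congr rfl fun j _ => by norm_num; ring
  have D1 := keyP β B P hP a 1 r e he (Qplus a 2 f) hg1
  rw [show Real.cosh (β*B) = ch from rfl] at D1
  have hg2 : ∀ x y : ℝ, Qplus a' 4 f x y
      = ∑ j ∈ range (r+1), y^(j+1) * (a' * x^3 * e j x) := by
    intro x y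
    simp only [Qplus]
    rw [hS, Finset.mul_sum]
    exact Finset.sum_congr rfl fun j _ => by norm_num; ring
  have D2 := keyP β B P hP a' 3 r e he (Qplus a' 4 f) hg2
  rw [show Real.cosh (β*B) = ch from rfl] at D2
  have hg3 : ∀ x y : ℝ, Qone q 3 (P (Qplus a 2 f)) x y
      = ∑ j ∈ range (r+1), y^(j+1) * ((q * a / (2 * ch)) * x^3 * e j x) := by
    intro x y
    simp only [Qone]
    rw [D1]
    simp only [Finset.mul_sum]
    exact Finset.sum_congr rfl fun j _ => by field_simp; ring
  have D3 := keyP β B P hP (q * a / (2 * ch)) 3 r e he _ hg3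
  rw [show Real.cosh (β*B) = ch from rfl] at D3
  constructor
  · intro x y
    simp only [Qzero, Qminus]
    rw [hS, D1]
    set s := ∑ j ∈ range (r+1), y ^ j * e j x with hs
    field_simp
    linear_combination (12*β^2*x^3*s)*hsh2 - (4*β^2*x^3*s)*htc
  · intro x y
    simp only [Qzero, Qminus]
    rw [hS, D1, D2, D3, hsqrt]
    set s := ∑ j ∈ range (r+1), y ^ j * e j x with hs
    subst hβ
    field_simp
    linear_combination (-4050*ch*x^5*s)*hsh2 + (1350*ch*x^5*s)*htc
end

section
/- Let β = 3/2 and B > 0 satisfy cosh²(βB) = 3/2, and let κ, θ ∈ ℝ. Define the operators Q₂⁺, Q₂⁻, Q₃¹, Q₄⁺, Q₄⁻, Q₅⁰ and P as in the context, together with Q₃₁¹g(x,y) = −2·sinh(βB)·(Bκ + βθ)·y·∂₂g(x,y), Q₄₂⁺g(x,y) = −2·((sinh(βB) + βB·cosh(βB))·κ + β²·cosh(βB)·θ)·x·y·∂₁g(x,y), Q₄₂⁻g(x,y) = −2·((sinh(βB) + βB·cosh(βB))·κ + β²·cosh(βB)·θ)·x²·∂₂g(x,y), and Q₅₃⁰g(x,y)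 = −(2/3)·(β·(2cosh(βB) + βB·sinh(βB))·κ + β³·sinh(βB)·θ)·x³·∂₁g(x,y). Then for every f ∈ V and all (x,y) ∈ ℝ²: (Q₅⁰ + Q₅₃⁰ + Q₂⁻PQ₄⁺ + Q₄⁻PQ₂⁺ + Q₂⁻PQ₄₂⁺ + Q₄₂⁻PQ₂⁺ + Q₂⁻PQ₃¹PQ₂⁺ + Q₂⁻PQ₃₁¹PQ₂⁺)f(x,y) = −(9/10)·√(3/2)·x⁵·∂₁f(x,y) + (3√2·B·κ + (9/√2)·θ)·x³·∂₁f(x,y). (Since (3/2)·B = arccosh(√(3/2)), the x³-coefficient equals 2√2·arccosh(√(3/2))·κ + (9/√2)·θ.) -/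
lemma aux_deriv1 (f : ℝ → ℝ → ℝ) (r : ℕ) (c : ℕ → ℝ → ℝ)
    (hc : ∀ j, ContDiff ℝ (⊤ : ℕ∞) (c j) ∧ HasCompactSupport (c j))
    (hf : ∀ x y : ℝ, f x y = ∑ j ∈ Finset.range (r + 1), y ^ j * c j x) :
    ∀ x y : ℝ, deriv (fun x' => f x' y) x
      = ∑ j ∈ Finset.range (r + 1), y ^ j * deriv (c j) x := by
  intro x y
  have h1 : (fun x' => f x' y) = fun x' => ∑ j ∈ Finset.range (r + 1), y ^ j * c j x' :=
    funext fun x' => hf x' y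
  rw [h1, deriv_fun_sum (fun j _ => by
    exact (((hc j).1.differentiable (by simp)) x).const_mul _)]
  exact Finset.sum_congr rfl fun j _ => deriv_const_mul _ (((hc j).1.differentiable (by simp)) x)

lemma key_lemma (β B : ℝ) (P : (ℝ → ℝ → ℝ) → ℝ → ℝ → ℝ)
    (hP : ∀ (g : ℝ → ℝ → ℝ) (r : ℕ) (c : ℕ → ℝ → ℝ),
      (∀ j, ContDiff ℝ (⊤ : ℕ∞) (c j) ∧ HasCompactSupport (c j)) →
      (∀ x y : ℝ, g x y = ∑ j ∈ Finset.range (r + 1), y ^ j * c j x) →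
      ∀ x y : ℝ, P g x y
        = ∑ j ∈ Finset.Icc 1 r, y ^ j * c j x / (2 * (j : ℝ) * Real.cosh (β * B)))
    (f : ℝ → ℝ → ℝ) (r : ℕ) (c : ℕ → ℝ → ℝ)
    (hc : ∀ j, ContDiff ℝ (⊤ : ℕ∞) (c j) ∧ HasCompactSupport (c j))
    (hf : ∀ x y : ℝ, f x y = ∑ j ∈ Finset.range (r + 1), y ^ j * c j x)
    (a : ℝ) (k : ℕ) :
    ∀ x y : ℝ, deriv (fun y' => P (Qplus a k f) x y') y
      = a / (2 * Real.cosh (β * B)) * x ^ (k - 1) * deriv (fun x' => f x' y) x := by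
  intro x y
  set C := Real.cosh (β * B) with hC
  have hC0 : C ≠ 0 := ne_of_gt (Real.cosh_pos _)
  set d : ℕ → ℝ → ℝ := fun j x => if j = 0 then 0 else a * x ^ (k - 1) * deriv (c (j - 1)) x
    with hd_def
  have hd : ∀ j, ContDiff ℝ (⊤ : ℕ∞) (d j) ∧ HasCompactSupport (d j) := by
    intro j
    cases j with
    | zero => simpa [hd_def] using ⟨contDiff_const, HasCompactSupport.zero⟩
    | succ n =>
      constructor
      · simp only [hd_def, Nat.succ_ne_zero, if_false, Nat.add_sub_cancel]
        refine (contDiff_const.mul (contDiff_id.pow _)).mul ?_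
        have h' : ContDiff ℝ (((⊤ : ℕ∞) : WithTop ℕ∞) + 1) (c n) := by
          exact (hc n).1.of_le (by simp)
        exact (contDiff_succ_iff_deriv.mp h').2.2
      · have h2 : HasCompactSupport (deriv (c n)) := (hc n).2.deriv
        have : d (n + 1) = (fun x => a * x ^ (k-1)) * deriv (c n) := by
          funext x; simp [hd_def]
        rw [this]
        exact h2.mul_left
  have hrep : ∀ x y : ℝ, Qplus a k f x y = ∑ j ∈ Finset.range (r + 1 + 1), y ^ j * d j x := by
    intro x y
    rw [Finset.sum_range_succ']
    simp only [hd_def, Nat.succ_ne_zero, if_false, Nat.add_sub_cancel, if_true, pow_zero,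
      eq_self_iff_true, if_pos rfl]
    rw [mul_zero, add_zero]
    show a * x ^ (k - 1) * y * deriv (fun x' => f x' y) x = _
    rw [aux_deriv1 f r c hc hf, Finset.mul_sum]
    exact Finset.sum_congr rfl fun j _ => by ring
  have hPval := hP _ (r + 1) d hd hrep
  have h3 : (fun y' => P (Qplus a k f) x y')
      = fun y' => ∑ j ∈ Finset.Icc 1 (r + 1), y' ^ j * (d j x / (2 * (j : ℝ) * C)) := by
    funext y'
    rw [hPval x y']
    exact Finset.sum_congr rfl fun j _ => by rw [mul_div_assoc]
  rw [h3, deriv_fun_sum (fun j _ => ((differentiable_pow j) y).mul_const _)]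
  have h4 : ∀ j ∈ Finset.Icc 1 (r + 1),
      deriv (fun y' : ℝ => y' ^ j * (d j x / (2 * (j : ℝ) * C))) y
        = y ^ (j - 1) * (d j x / (2 * C)) := by
    intro j hj
    rw [deriv_mul_const ((differentiable_pow j) y), deriv_pow_field]
    have hj1 : 1 ≤ j := (Finset.mem_Icc.mp hj).1
    have hjne : (j : ℝ) ≠ 0 := Nat.cast_ne_zero.mpr (by omega)
    field_simp
  rw [Finset.sum_congr rfl h4, ← Finset.Ico_add_one_right_eq_Icc, Finset.sum_Ico_eq_sum_range]
  simp only [Nat.succ_sub_one, Nat.add_sub_cancel]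
  have h5 : ∀ j ∈ Finset.range (r + 1),
      y ^ (1 + j - 1) * (d (1 + j) x / (2 * C))
        = a / (2 * C) * x ^ (k - 1) * (y ^ j * deriv (c j) x) := by
    intro j _
    have : 1 + j - 1 = j := by omega
    rw [this]
    have hne : 1 + j ≠ 0 := by omega
    simp only [hd_def, hne, if_false, Nat.add_sub_cancel_left]
    field_simp
  rw [Finset.sum_congr rfl h5, aux_deriv1 f r c hc hf, Finset.mul_sum]

/-- At the tri-critical point `β = 3/2`, `cosh²(βB) = 3/2`,
approached along the critical curve with limiting rescaled increments `κ, θ`,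
for every `f ∈ V`:
`(Q₅⁰ + Q₅₃⁰ + Q₂⁻PQ₄⁺ + Q₄⁻PQ₂⁺ + Q₂⁻PQ₄₂⁺ + Q₄₂⁻PQ₂⁺ + Q₂⁻PQ₃¹PQ₂⁺
   + Q₂⁻PQ₃₁¹PQ₂⁺)f
 = −(9/10)·√(3/2)·x⁵·∂₁f + (3√2·B·κ + (9/√2)·θ)·x³·∂₁f`. -/
theorem limiting_drift_tricritical_point_rescaled_on_curve
    (β B : ℝ) (hβ : β = 3 / 2) (hB : 0 < B)
    (htc : Real.cosh (β * B) ^ 2 = 3 / 2) (κ θ : ℝ)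
    (P : (ℝ → ℝ → ℝ) → ℝ → ℝ → ℝ)
    (hP : ∀ (g : ℝ → ℝ → ℝ) (r : ℕ) (c : ℕ → ℝ → ℝ),
      (∀ j, ContDiff ℝ (⊤ : ℕ∞) (c j) ∧ HasCompactSupport (c j)) →
      (∀ x y : ℝ, g x y = ∑ j ∈ Finset.range (r + 1), y ^ j * c j x) →
      ∀ x y : ℝ, P g x y
        = ∑ j ∈ Finset.Icc 1 r, y ^ j * c j x / (2 * (j : ℝ) * Real.cosh (β * B)))
    (f : ℝ → ℝ → ℝ) (r : ℕ) (c : ℕ → ℝ → ℝ)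
    (hc : ∀ j, ContDiff ℝ (⊤ : ℕ∞) (c j) ∧ HasCompactSupport (c j))
    (hf : ∀ x y : ℝ, f x y = ∑ j ∈ Finset.range (r + 1), y ^ j * c j x) :
    ∀ x y : ℝ,
      Qzero (-(1 / 15) * β ^ 4 * Real.cosh (β * B)) 5 f x y
        + Qzero (-(2 / 3) * (β * (2 * Real.cosh (β * B) + β * B * Real.sinh (β * B)) * κ
            + β ^ 3 * Real.sinh (β * B) * θ)) 3 f x y
        + Qminus (-2 * β * Real.sinh (β * B)) 2
            (P (Qplus (-(1 / 3) * β ^ 3 * Real.sinh (β * B)) 4 f)) x y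
        + Qminus (-(1 / 3) * β ^ 3 * Real.sinh (β * B)) 4
            (P (Qplus (-2 * β * Real.sinh (β * B)) 2 f)) x y
        + Qminus (-2 * β * Real.sinh (β * B)) 2
            (P (Qplus (-2 * ((Real.sinh (β * B) + β * B * Real.cosh (β * B)) * κ
              + β ^ 2 * Real.cosh (β * B) * θ)) 2 f)) x y
        + Qminus (-2 * ((Real.sinh (β * B) + β * B * Real.cosh (β * B)) * κ
              + β ^ 2 * Real.cosh (β * B) * θ)) 2
            (P (Qplus (-2 * β * Real.sinh (β * B)) 2 f)) x y
        + Qminus (-2 * β * Real.sinh (β * B)) 2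
            (P (Qone (-(β ^ 2 * Real.cosh (β * B))) 3
              (P (Qplus (-2 * β * Real.sinh (β * B)) 2 f)))) x y
        + Qminus (-2 * β * Real.sinh (β * B)) 2
            (P (Qone (-2 * Real.sinh (β * B) * (B * κ + β * θ)) 1
              (P (Qplus (-2 * β * Real.sinh (β * B)) 2 f)))) x y
      = -(9 / 10) * Real.sqrt (3 / 2) * x ^ 5 * deriv (fun x' => f x' y) x
        + (3 * Real.sqrt 2 * B * κ + 9 / Real.sqrt 2 * θ) * x ^ 3
            * deriv (fun x' => f x' y) x := by
  have key := key_lemma β B P hP f r c hc hf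
  have hC0 : Real.cosh (β * B) ≠ 0 := ne_of_gt (Real.cosh_pos _)
  have hQone3 : ∀ a b : ℝ, Qone b 3 (P (Qplus a 2 f))
      = Qplus (a * b / (2 * Real.cosh (β * B))) 4 f := by
    intro a b
    funext x y
    simp only [Qone, Qplus]
    rw [key a 2 x y]
    norm_num
    ring
  have hQone1 : ∀ a b : ℝ, Qone b 1 (P (Qplus a 2 f))
      = Qplus (a * b / (2 * Real.cosh (β * B))) 2 f := by
    intro a b
    funext x y
    simp only [Qone, Qplus]
    rw [key a 2 x y]
    norm_num
    ring
  intro x y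
  rw [hQone3, hQone1]
  simp only [Qzero, Qminus]
  simp only [key]
  -- now pure algebra
  set D := deriv (fun x' => f x' y) x
  set C := Real.cosh (β * B) with hCdef
  set S := Real.sinh (β * B) with hSdef
  have hS2 : S ^ 2 = 1 / 2 := by rw [hSdef, Real.sinh_sq, htc]; norm_num
  have hSpos : 0 < S := by
    rw [hSdef]
    have : 0 < β * B := by rw [hβ]; positivity
    exact (Real.sinh_pos_iff).mpr this
  have hCval : Real.sqrt (3 / 2) = C := by
    rw [← htc]; exact Real.sqrt_sq (Real.cosh_pos _).le
  have hsqrt2 : Real.sqrt 2 = 2 * S := by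
    have h2 : ((2 : ℝ) * S) ^ 2 = 2 := by rw [mul_pow, hS2]; norm_num
    calc Real.sqrt 2 = Real.sqrt ((2 * S) ^ 2) := by rw [h2]
      _ = 2 * S := Real.sqrt_sq (by positivity)
  rw [hCval, hsqrt2]
  have hC2 : C ^ 2 = 3 / 2 := htc
  subst hβ
  have hS0 : S ≠ 0 := ne_of_gt hSpos
  have e5 : -(1/15)*(3/2:ℝ)^4*C * 1
        + (-2*(3/2)*S) * (-(1/3)*(3/2:ℝ)^3*S/(2*C))
        + (-(1/3)*(3/2:ℝ)^3*S) * (-2*(3/2)*S/(2*C))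
        + (-2*(3/2)*S) * (-2*(3/2)*S*(-((3/2:ℝ)^2*C))/(2*C)/(2*C))
      = -(9/10)*C := by
    field_simp
    ring_nf
    linear_combination (-4050) * hS2 + 1350 * hC2
  have e3 : -(2/3)*((3/2:ℝ)*(2*C + (3/2)*B*S)*κ + (3/2:ℝ)^3*S*θ) * 1
        + (-2*(3/2)*S) * (-2*((S + (3/2)*B*C)*κ + (3/2:ℝ)^2*C*θ)/(2*C))
        + (-2*((S + (3/2)*B*C)*κ + (3/2:ℝ)^2*C*θ)) * (-2*(3/2)*S/(2*C))
        + (-2*(3/2)*S) * (-2*(3/2)*S*(-2*S*(B*κ + (3/2)*θ))/(2*C)/(2*C))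
      = 3*(2*S)*B*κ + 9/(2*S)*θ := by
    field_simp
    ring_nf
    linear_combination
      (κ * (24 * S * C) - B * κ * (18 * S^2) + θ * (54 - 27 * S^2)) * hS2
      + (-κ * (8 * S * C) + B * κ * (6 * S^2) + θ * (45 * S^2 - 18)) * hC2
  linear_combination (x^5*D) * e5 + (x^3*D) * e3
end

section
/- Let β = 3/2 and B > 0 satisfy cosh²(βB) = 3/2, and let κ, θ ∈ ℝ. Define the operators Q₂⁺, Q₂⁻, Q₃¹, Q₄⁺, Q₄⁻, Q₅⁰ and P as in the context, together with Q₅₁⁰g(x,y) = (2·(1 − 2βB·tanh(βB))·κ/cosh(βB) − 4β·sinh(βB)·θ)·x·∂₁g(x,y). Then for every f ∈ V and all (x,y) ∈ ℝ²: (Q₅⁰ + Q₅₁⁰ + Q₂⁻PQ₄⁺ + Q₄⁻PQ₂⁺ + Q₂⁻PQ₃¹PQ₂⁺)f(x,y) = (((2/3)·√6 − 2√2·B)·κ − 3√2·θ)·x·∂₁f(x,y) − (9/10)·√(3/2)·x⁵·∂₁f(x,y). (Since (3/2)·B = arccosh(√(3/2)), the x-coefficient equals (2/3)·(√6 − 2√2·arccosh(√(3/2)))·κ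 − 3√2·θ.) -/
/-- coefficient family for `A·x^p·y·∂₁f`. -/
noncomputable def dcoef (c : ℕ → ℝ → ℝ) (A : ℝ) (p : ℕ) : ℕ → ℝ → ℝ :=
  fun j x => if j = 0 then 0 else A * x ^ p * deriv (c (j - 1)) x

lemma sum_Icc_one_shift (n : ℕ) (F : ℕ → ℝ) :
    ∑ j ∈ Finset.Icc 1 n, F j = ∑ i ∈ Finset.range n, F (i + 1) := by
  rw [← Finset.Ico_add_one_right_eq_Icc, Finset.sum_Ico_eq_sum_range]
  simp [Nat.add_comm]

lemma dcoef_prop (c : ℕ → ℝ → ℝ)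
    (hc : ∀ j, ContDiff ℝ (⊤ : ℕ∞) (c j) ∧ HasCompactSupport (c j)) (A : ℝ) (p : ℕ) (j : ℕ) :
    ContDiff ℝ (⊤ : ℕ∞) (dcoef c A p j) ∧ HasCompactSupport (dcoef c A p j) := by
  unfold dcoef
  rcases j with _ | i
  · simp only [if_pos rfl]
    exact ⟨contDiff_const, by simp [HasCompactSupport, tsupport]⟩
  · simp only [Nat.succ_ne_zero, if_false, Nat.add_sub_cancel]
    have h0 : ContDiff ℝ (((⊤ : ℕ∞) : WithTop ℕ∞) + 1) (c i) := (hc i).1.of_le (by simp)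
    have h1 : ContDiff ℝ (⊤ : ℕ∞) (deriv (c i)) := (contDiff_succ_iff_deriv.mp h0).2.2
    have h2 : HasCompactSupport (deriv (c i)) := (hc i).2.deriv
    refine ⟨?_, ?_⟩
    · exact (contDiff_const.mul (contDiff_id.pow p)).mul h1
    · exact h2.mul_left

/-- At the tri-critical point `β = 3/2`, `cosh²(βB) = 3/2`,
approached from an arbitrary direction with limiting rescaled increments `κ, θ`,
for every `f ∈ V`:
`(Q₅⁰ + Q₅₁⁰ + Q₂⁻PQ₄⁺ + Q₄⁻PQ₂⁺ + Q₂⁻PQ₃¹PQ₂⁺)f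
 = (((2/3)√6 − 2√2·B)·κ − 3√2·θ)·x·∂₁f − (9/10)·√(3/2)·x⁵·∂₁f`,
where `Q₅₁⁰ g = (2(1 − 2βB·tanh(βB))·κ/cosh(βB) − 4β·sinh(βB)·θ)·x·∂₁g`. -/
theorem limiting_drift_tricritical_point_rescaled_arbitrary_direction
    (β B : ℝ) (hβ : β = 3 / 2) (hB : 0 < B)
    (htc : Real.cosh (β * B) ^ 2 = 3 / 2) (κ θ : ℝ)
    (P : (ℝ → ℝ → ℝ) → ℝ → ℝ → ℝ)
    (hP : ∀ (g : ℝ → ℝ → ℝ) (r : ℕ) (c : ℕ → ℝ → ℝ),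
      (∀ j, ContDiff ℝ (⊤ : ℕ∞) (c j) ∧ HasCompactSupport (c j)) →
      (∀ x y : ℝ, g x y = ∑ j ∈ Finset.range (r + 1), y ^ j * c j x) →
      ∀ x y : ℝ, P g x y
        = ∑ j ∈ Finset.Icc 1 r, y ^ j * c j x / (2 * (j : ℝ) * Real.cosh (β * B)))
    (f : ℝ → ℝ → ℝ) (r : ℕ) (c : ℕ → ℝ → ℝ)
    (hc : ∀ j, ContDiff ℝ (⊤ : ℕ∞) (c j) ∧ HasCompactSupport (c j))
    (hf : ∀ x y : ℝ, f x y = ∑ j ∈ Finset.range (r + 1), y ^ j * c j x) :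
    ∀ x y : ℝ,
      Qzero (-(1 / 15) * β ^ 4 * Real.cosh (β * B)) 5 f x y
        + Qzero (2 * (1 - 2 * β * B * Real.tanh (β * B)) * κ / Real.cosh (β * B)
            - 4 * β * Real.sinh (β * B) * θ) 1 f x y
        + Qminus (-2 * β * Real.sinh (β * B)) 2
            (P (Qplus (-(1 / 3) * β ^ 3 * Real.sinh (β * B)) 4 f)) x y
        + Qminus (-(1 / 3) * β ^ 3 * Real.sinh (β * B)) 4
            (P (Qplus (-2 * β * Real.sinh (β * B)) 2 f)) x y
        + Qminus (-2 * β * Real.sinh (β * B)) 2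
            (P (Qone (-(β ^ 2 * Real.cosh (β * B))) 3
              (P (Qplus (-2 * β * Real.sinh (β * B)) 2 f)))) x y
      = (((2 / 3) * Real.sqrt 6 - 2 * Real.sqrt 2 * B) * κ - 3 * Real.sqrt 2 * θ) * x
          * deriv (fun x' => f x' y) x
        - (9 / 10) * Real.sqrt (3 / 2) * x ^ 5 * deriv (fun x' => f x' y) x := by
  have hCpos : 0 < Real.cosh (β * B) := Real.cosh_pos _
  have hCne : Real.cosh (β * B) ≠ 0 := ne_of_gt hCpos
  have hdiff : ∀ j, Differentiable ℝ (c j) := fun j => (hc j).1.differentiable (by simp)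
  set C := Real.cosh (β * B) with hCdef
  set S := Real.sinh (β * B) with hSdef
  -- ∂₁ f
  have hD1 : ∀ (x y : ℝ), deriv (fun x' => f x' y) x
      = ∑ j ∈ Finset.range (r + 1), y ^ j * deriv (c j) x := by
    intro x y
    have hfe : (fun x' => f x' y) = fun x' => ∑ j ∈ Finset.range (r + 1), y ^ j * c j x' :=
      funext fun x' => hf x' y
    rw [hfe, deriv_fun_sum (fun j _ => ((hdiff j).differentiableAt).const_mul _)]
    exact Finset.sum_congr rfl fun j _ => deriv_const_mul _ ((hdiff j).differentiableAt)
  -- representation of A·x^p·y·∂₁f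
  have hrep : ∀ (A : ℝ) (p : ℕ) (x y : ℝ),
      A * x ^ p * y * deriv (fun x' => f x' y) x
        = ∑ j ∈ Finset.range (r + 1 + 1), y ^ j * dcoef c A p j x := by
    intro A p x y
    rw [Finset.sum_range_succ', hD1, Finset.mul_sum]
    simp only [dcoef, Nat.succ_ne_zero, if_false, Nat.add_sub_cancel, eq_self_iff_true,
      if_true, mul_zero, add_zero]
    exact Finset.sum_congr rfl fun j _ => by ring
  -- P of that
  have hPrep : ∀ (A : ℝ) (p : ℕ) (x y : ℝ),
      P (fun x y => A * x ^ p * y * deriv (fun x' => f x' y) x) x y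
        = ∑ j ∈ Finset.Icc 1 (r + 1), y ^ j * dcoef c A p j x / (2 * (j : ℝ) * C) :=
    fun A p x y => hP _ (r + 1) (dcoef c A p) (dcoef_prop c hc A p) (hrep A p) x y
  -- ∂₂ of P of that
  have hD2 : ∀ (A : ℝ) (p : ℕ) (x y : ℝ),
      deriv (fun y' => P (fun x y => A * x ^ p * y * deriv (fun x' => f x' y) x) x y') y
        = A / (2 * C) * x ^ p * deriv (fun x' => f x' y) x := by
    intro A p x y
    have h1 : (fun y' => P (fun x y => A * x ^ p * y * deriv (fun x' => f x' y) x) x y')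
        = fun y' => ∑ j ∈ Finset.Icc 1 (r + 1),
            (dcoef c A p j x / (2 * (j : ℝ) * C)) * y' ^ j := by
      funext y'
      rw [hPrep A p x y']
      exact Finset.sum_congr rfl fun j _ => by ring
    rw [h1, deriv_fun_sum (fun j _ => (differentiableAt_pow j).const_mul _)]
    have h2 : ∀ j ∈ Finset.Icc 1 (r + 1),
        deriv (fun y' => (dcoef c A p j x / (2 * (j : ℝ) * C)) * y' ^ j) y
          = (dcoef c A p j x / (2 * (j : ℝ) * C)) * ((j : ℝ) * y ^ (j - 1)) := by
      intro j _
      rw [deriv_const_mul _ (differentiableAt_pow j), deriv_pow_field]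
    rw [Finset.sum_congr rfl h2, sum_Icc_one_shift, hD1, Finset.mul_sum]
    refine Finset.sum_congr rfl fun j _ => ?_
    simp only [dcoef, Nat.succ_ne_zero, if_false, Nat.add_sub_cancel]
    have hj : ((j : ℝ) + 1) ≠ 0 := by positivity
    push_cast
    field_simp
  -- Qminus ∘ P on that form
  have hQmP : ∀ (b A : ℝ) (m p : ℕ) (x y : ℝ),
      Qminus b m (P (fun x y => A * x ^ p * y * deriv (fun x' => f x' y) x)) x y
        = b * A / (2 * C) * x ^ (m + p) * deriv (fun x' => f x' y) x := by
    intro b A m p x y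
    show b * x ^ m * deriv (fun y' => P _ x y') y = _
    rw [hD2, pow_add]
    ring
  have e4 : Qplus (-(1 / 3) * β ^ 3 * S) 4 f
      = fun x y => (-(1 / 3) * β ^ 3 * S) * x ^ 3 * y * deriv (fun x' => f x' y) x := rfl
  have e2 : Qplus (-2 * β * S) 2 f
      = fun x y => (-2 * β * S) * x ^ 1 * y * deriv (fun x' => f x' y) x := rfl
  have hQ31 : Qone (-(β ^ 2 * C)) 3 (P (Qplus (-2 * β * S) 2 f))
      = fun x y => ((-(β ^ 2 * C)) * (-2 * β * S) / (2 * C)) * x ^ 3 * y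
          * deriv (fun x' => f x' y) x := by
    funext x y
    show (-(β ^ 2 * C)) * x ^ (3 - 1) * y
        * deriv (fun y' => P (Qplus (-2 * β * S) 2 f) x y') y = _
    rw [e2, hD2]
    norm_num
    ring
  intro x y
  rw [show Qminus (-2 * β * S) 2 (P (Qplus (-(1 / 3) * β ^ 3 * S) 4 f)) x y
      = Qminus (-2 * β * S) 2
          (P (fun x y => (-(1 / 3) * β ^ 3 * S) * x ^ 3 * y * deriv (fun x' => f x' y) x)) x y
    from by rw [e4]]
  rw [show Qminus (-(1 / 3) * β ^ 3 * S) 4 (P (Qplus (-2 * β * S) 2 f)) x y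
      = Qminus (-(1 / 3) * β ^ 3 * S) 4
          (P (fun x y => (-2 * β * S) * x ^ 1 * y * deriv (fun x' => f x' y) x)) x y
    from by rw [e2]]
  rw [hQ31, hQmP, hQmP, hQmP]
  simp only [Qzero]
  -- algebra
  have hS2 : S ^ 2 = 1 / 2 := by
    have := Real.cosh_sq (β * B)
    rw [← hCdef, ← hSdef] at this
    linarith [htc]
  have hSpos : 0 < S := by
    rw [hSdef]
    exact Real.sinh_pos_iff.mpr (by rw [hβ]; positivity)
  have htanh : Real.tanh (β * B) = S / C := Real.tanh_eq_sinh_div_cosh _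
  have hsq2 : Real.sqrt 2 = 2 * S := by
    nth_rewrite 1 [show (2 : ℝ) = (2 * S) ^ 2 by nlinarith]
    exact Real.sqrt_sq (by positivity)
  have hsq6 : Real.sqrt 6 = 2 * C := by
    rw [show (6 : ℝ) = (2 * C) ^ 2 by nlinarith, Real.sqrt_sq (by positivity)]
  have hsq32 : Real.sqrt (3 / 2) = C := by
    rw [← htc, Real.sqrt_sq hCpos.le]
  rw [htanh, hsq2, hsq6, hsq32, hβ]
  have hC2 : C ^ 2 = 3 / 2 := htc
  linear_combination (norm := (field_simp; ring))
    (x * (deriv (fun x' => f x' y) x) * κ * (-(4/3)/C + 4*B*S/C^2)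
      + x^5 * (deriv (fun x' => f x' y) x) * (9/(16*C))) * hC2
    + (-27/(16*C) * x^5 * (deriv (fun x' => f x' y) x)) * hS2
end

section
/- Let 1 < β ≤ 3/2 and B > 0 satisfy β = cosh²(βB). Then for all x, y ∈ ℝ, all b > 0 and all ν ∈ ℝ: −5β⁴·cosh(βB)·b^{ν−4}·x⁴y² − 60β²·cosh(βB)·b^{ν−2}·x²y² − 120·cosh(βB)·b^{ν}·y² − 40β³·sinh(βB)·b^{ν−3}·x⁴y − 240β·sinh(βB)·b^{ν−1}·x²y − 4β⁴·cosh(βB)·b^{ν−4}·x⁶ − 40β²·cosh(βB)·b^{ν−2}·x⁴ ≤ 0, where b^{s} denotes the real power of the positive real b. -/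
/-!
After factoring out `b ^ (ν - 4) > 0`, `-Ξ` is a quadratic in `y` with positive leading
coefficient `cosh(βB)·(5w² + 60wb² + 120b⁴)`, where `w = β²x²`. Its discriminant is
`16(βx²)²·(100 sinh²(βB)·b²(w + 6b²)² − cosh²(βB)(5w² + 60wb² + 120b⁴)(w + 10b²))`, and on the
critical curve `cosh²(βB) = β ≤ 3/2` gives `3 sinh²(βB) ≤ cosh²(βB)`, i.e. `tanh²(βB) ≤ 1/3`,
which makes the bracket non-positive: the `b⁶` terms cancel exactly and what remains is
`-cosh²(βB)·w·(5w² + 230/3·wb² + 320b⁴)`.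
-/

open Real

theorem quadratic_nonneg_of_discrim_nonpos {K : Type*} [CommRing K] [LinearOrder K]
    [IsStrictOrderedRing K] {a b c : K} (ha : 0 < a) (h : discrim a b c ≤ 0) (x : K) :
    0 ≤ a * (x * x) + b * x + c := by
  have hsq : 4 * a * (a * (x * x) + b * x + c) = (2 * a * x + b) ^ 2 - discrim a b c := by
    rw [discrim]; ring
  refine nonneg_of_mul_nonneg_right (a := 4 * a) ?_ (by positivity)
  rw [hsq]
  nlinarith [sq_nonneg (2 * a * x + b)]

theorem three_mul_sinh_sq_le_cosh_sq {t : ℝ} (h : cosh t ^ 2 ≤ 3 / 2) :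
    3 * sinh t ^ 2 ≤ cosh t ^ 2 := by
  rw [sinh_sq]; linarith

theorem Xi_discrim_nonpos {c s u b w : ℝ} (hw : 0 ≤ w) (hsc : 3 * s ^ 2 ≤ c ^ 2) :
    discrim (c * (5 * w ^ 2 + 60 * w * b ^ 2 + 120 * b ^ 4)) (40 * s * u * b * (w + 6 * b ^ 2))
      (4 * c * u ^ 2 * (w + 10 * b ^ 2)) ≤ 0 := by
  have hs : 100 * s ^ 2 * b ^ 2 * (w + 6 * b ^ 2) ^ 2
      ≤ 100 / 3 * c ^ 2 * b ^ 2 * (w + 6 * b ^ 2) ^ 2 := by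
    linarith [mul_le_mul_of_nonneg_right hsc (by positivity : 0 ≤ b ^ 2 * (w + 6 * b ^ 2) ^ 2)]
  have hgap : c ^ 2 * (5 * w ^ 2 + 60 * w * b ^ 2 + 120 * b ^ 4) * (w + 10 * b ^ 2)
      - 100 / 3 * c ^ 2 * b ^ 2 * (w + 6 * b ^ 2) ^ 2
      = c ^ 2 * w * (5 * w ^ 2 + 230 / 3 * w * b ^ 2 + 320 * b ^ 4) := by ring
  have hgap_nonneg : 0 ≤ c ^ 2 * w * (5 * w ^ 2 + 230 / 3 * w * b ^ 2 + 320 * b ^ 4) := by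
    positivity
  calc discrim _ _ _
      = 16 * u ^ 2 * (100 * s ^ 2 * b ^ 2 * (w + 6 * b ^ 2) ^ 2
          - c ^ 2 * (5 * w ^ 2 + 60 * w * b ^ 2 + 120 * b ^ 4) * (w + 10 * b ^ 2)) := by
        rw [discrim]; ring
    _ ≤ 0 := mul_nonpos_of_nonneg_of_nonpos (by positivity) (by linarith)

theorem rpow_sub_natCast_eq_mul_pow {b : ℝ} (hb : b ≠ 0) (ν : ℝ) {m n : ℕ} (h : n ≤ m) :
    b ^ (ν - n) = b ^ (ν - m) * b ^ (m - n) := by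
  rw [← rpow_add_natCast hb, Nat.cast_sub h]
  ring_nf

theorem Xi_nonpositive_general (β B : ℝ) (hβ2 : β ≤ 3 / 2)
    (hcrit : β = Real.cosh (β * B) ^ 2) :
    ∀ (x y b ν : ℝ), 0 < b →
      -5 * β ^ 4 * Real.cosh (β * B) * b ^ (ν - 4) * x ^ 4 * y ^ 2
        - 60 * β ^ 2 * Real.cosh (β * B) * b ^ (ν - 2) * x ^ 2 * y ^ 2
        - 120 * Real.cosh (β * B) * b ^ ν * y ^ 2
        - 40 * β ^ 3 * Real.sinh (β * B) * b ^ (ν - 3) * x ^ 4 * y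
        - 240 * β * Real.sinh (β * B) * b ^ (ν - 1) * x ^ 2 * y
        - 4 * β ^ 4 * Real.cosh (β * B) * b ^ (ν - 4) * x ^ 6
        - 40 * β ^ 2 * Real.cosh (β * B) * b ^ (ν - 2) * x ^ 4 ≤ 0 := by
  intro x y b ν hb
  set c := cosh (β * B)
  set s := sinh (β * B)
  have hsc : 3 * s ^ 2 ≤ c ^ 2 := three_mul_sinh_sq_le_cosh_sq (hcrit ▸ hβ2)
  have hlead : 0 < c * (5 * (β ^ 2 * x ^ 2) ^ 2 + 60 * (β ^ 2 * x ^ 2) * b ^ 2 + 120 * b ^ 4) :=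
    mul_pos (cosh_pos _) (by positivity)
  have hQ := quadratic_nonneg_of_discrim_nonpos hlead
    (Xi_discrim_nonpos (u := β * x ^ 2) (by positivity) hsc) y
  have hP : 0 < b ^ (ν - 4) := rpow_pos_of_pos hb _
  have h3 : b ^ (ν - 3) = b ^ (ν - 4) * b := by
    simpa using rpow_sub_natCast_eq_mul_pow hb.ne' ν (m := 4) (n := 3) (by norm_num)
  have h2 : b ^ (ν - 2) = b ^ (ν - 4) * b ^ 2 := by
    simpa using rpow_sub_natCast_eq_mul_pow hb.ne' ν (m := 4) (n := 2) (by norm_num)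
  have h1 : b ^ (ν - 1) = b ^ (ν - 4) * b ^ 3 := by
    simpa using rpow_sub_natCast_eq_mul_pow hb.ne' ν (m := 4) (n := 1) (by norm_num)
  have h0 : b ^ ν = b ^ (ν - 4) * b ^ 4 := by
    simpa using rpow_sub_natCast_eq_mul_pow hb.ne' ν (m := 4) (n := 0) (by norm_num)
  rw [h0, h1, h2, h3]
  linarith [mul_nonneg hP.le hQ]

/-- Non-positivity of the quantity `Ξ_n(x,y)` arising in the
upper bound for the approximating Hamiltonians at criticality: for `1 < β ≤ 3/2`,
`B > 0` on the critical curve `β = cosh²(βB)`, all `x, y ∈ ℝ`, `b > 0`, `ν ∈ ℝ`. -/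
theorem Xi_nonpositive (β B : ℝ) (hβ1 : 1 < β) (hβ2 : β ≤ 3 / 2) (hB : 0 < B)
    (hcrit : β = Real.cosh (β * B) ^ 2) :
    ∀ (x y b ν : ℝ), 0 < b →
      -5 * β ^ 4 * Real.cosh (β * B) * b ^ (ν - 4) * x ^ 4 * y ^ 2
        - 60 * β ^ 2 * Real.cosh (β * B) * b ^ (ν - 2) * x ^ 2 * y ^ 2
        - 120 * Real.cosh (β * B) * b ^ ν * y ^ 2
        - 40 * β ^ 3 * Real.sinh (β * B) * b ^ (ν - 3) * x ^ 4 * y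
        - 240 * β * Real.sinh (β * B) * b ^ (ν - 1) * x ^ 2 * y
        - 4 * β ^ 4 * Real.cosh (β * B) * b ^ (ν - 4) * x ^ 6
        - 40 * β ^ 2 * Real.cosh (β * B) * b ^ (ν - 2) * x ^ 4 ≤ 0 :=
  Xi_nonpositive_general β B hβ2 hcrit
end
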